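/- arXiv:1411.0069 — 3 statements merged into one kernel-verified Lean document; each statement's English description precedes it below -/
import Mathlib

section
/- The matrices E_1, …, E_N pairwise commute: E_i E_j = E_j E_i for all 1 ≤ i, j ≤ N; hence their complex span 𝔞 = span_ℂ{E_1, …, E_N} is an abelian Lie subalgebra of the Lie algebra of (2N+2)×(2N+2) complex matrices. Moreover every element of 𝔞 is nilpotent: (Σ_{i=1}^N t_i E_i)⁴ = 0 for every t ∈ ℂ^N. -/
/-!
Matrices arising from the infinitesimal period map of polarized Calabi–Yau
threefolds.  Indices of `Fin (2 * N + 2)` are grouped in blocks of sizes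
`1, N, N, 1`: position `0` (`cyFst`), positions `1, …, N` (`cyBlk₁`),
positions `N + 1, …, 2N` (`cyBlk₂`), and position `2N + 1` (`cyLst`).
-/

/-- The first index `0` of `Fin (2 * N + 2)`. -/
def cyFst (N : ℕ) : Fin (2 * N + 2) := ⟨0, by omega⟩

/-- The index `1 + j` in `Fin (2 * N + 2)`: the `j`-th position of the second block. -/
def cyBlk₁ {N : ℕ} (j : Fin N) : Fin (2 * N + 2) := ⟨1 + j.val, by omega⟩

/-- The index `N + 1 + k` in `Fin (2 * N + 2)`: the `k`-th position of the third block. -/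
def cyBlk₂ {N : ℕ} (k : Fin N) : Fin (2 * N + 2) := ⟨N + 1 + k.val, by omega⟩

/-- The last index `2N + 1` of `Fin (2 * N + 2)`. -/
def cyLst (N : ℕ) : Fin (2 * N + 2) := ⟨2 * N + 1, by omega⟩

/-- Given `C : {1,…,N}³ → ℂ`, the matrix `E_i ∈ M_{2N+2}(ℂ)` in block form
`E_i = [[0, e_i, 0, 0], [0, 0, A_i, 0], [0, 0, 0, e_iᵀ], [0, 0, 0, 0]]`, where
`(A_i)_{jk} = C i j k`. -/
noncomputable def cyE {N : ℕ} (C : Fin N → Fin N → Fin N → ℂ) (i : Fin N) :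
    Matrix (Fin (2 * N + 2)) (Fin (2 * N + 2)) ℂ := fun a b =>
  (if a = cyFst N ∧ b = cyBlk₁ i then 1 else 0) +
    (∑ j : Fin N, ∑ k : Fin N,
      if a = cyBlk₁ j ∧ b = cyBlk₂ k then C i j k else 0) +
    (if a = cyBlk₂ i ∧ b = cyLst N then 1 else 0)

/-- `C` is symmetric under all permutations of its three indices. -/
def cySymm {N : ℕ} (C : Fin N → Fin N → Fin N → ℂ) : Prop :=
  (∀ i j k, C i j k = C j i k) ∧ (∀ i j k, C i j k = C i k j)

/-- The row vector `t A(t)`, where `A(t) = Σ_i t_i A_i` with `(A_i)_{jk} = C i j k`;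
`cyAt C t j k` is the `(j,k)` entry of `A(t)`. -/
noncomputable def cyAt {N : ℕ} (C : Fin N → Fin N → Fin N → ℂ) (t : Fin N → ℂ) (j k : Fin N) : ℂ :=
  ∑ i : Fin N, t i * C i j k

/-
Written as sums of matrix units, the products `E_i E_j` only see the blocks `e_i A_j` and
`A_i e_jᵀ`, with entries `C j i q` and `C i p j`; both are symmetric in `i, j` because `C` is,
so the `E_i` commute, and then so does everything in their span. For nilpotency, give the four
blocks the levels `0, 1, 2, 3`: each `E_i`, hence each element of the span, raises the level by
exactly one, so its fourth power would raise it by four and must vanish.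
-/

namespace Matrix

variable {n R : Type*} [Semiring R] {ℓ : n → ℕ}

variable (ℓ) in
def levelRaising (d : ℕ) : Submodule R (Matrix n n R) where
  carrier := {M | ∀ a b, ℓ b ≠ ℓ a + d → M a b = 0}
  add_mem' hM hM' a b h := by simp [hM a b h, hM' a b h]
  zero_mem' _ _ _ := rfl
  smul_mem' c M hM a b h := by simp [hM a b h]

theorem eq_zero_of_mem_levelRaising {d : ℕ} {M : Matrix n n R} (hM : M ∈ levelRaising ℓ d)
    (hℓ : ∀ a, ℓ a < d) : M = 0 :=
  ext fun a b => hM a b fun h => by have := hℓ b; omega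

theorem mul_mem_levelRaising [Fintype n] {p q : ℕ} {M M' : Matrix n n R}
    (hM : M ∈ levelRaising ℓ p) (hM' : M' ∈ levelRaising ℓ q) :
    M * M' ∈ levelRaising ℓ (p + q) := by
  intro a b hab
  rw [mul_apply]
  refine Finset.sum_eq_zero fun c _ => ?_
  by_cases hac : ℓ c = ℓ a + p
  · rw [hM' c b (by omega), mul_zero]
  · rw [hM a c hac, zero_mul]

variable [DecidableEq n]

theorem single_mul_single {l m : Type*} [DecidableEq l] [DecidableEq m] [Fintype m] (i : l)
    (j j' : m) (k : n) (a b : R) :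
    single i j a * single j' k b = if j = j' then single i k (a * b) else 0 := by
  split_ifs with h
  · subst h; simp
  · simp [h]

theorem single_mem_levelRaising {d : ℕ} {i j : n} (h : ℓ j = ℓ i + d) (c : R) :
    single i j c ∈ levelRaising ℓ d := by
  intro a b hab
  rw [single_apply_of_ne]
  rintro ⟨rfl, rfl⟩
  exact hab h

theorem one_mem_levelRaising_zero : (1 : Matrix n n R) ∈ levelRaising ℓ 0 :=
  fun _ _ h => one_apply_ne fun hab => h (by rw [hab, add_zero])

theorem pow_mem_levelRaising [Fintype n] {d : ℕ} {M : Matrix n n R}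
    (hM : M ∈ levelRaising ℓ d) (k : ℕ) : M ^ k ∈ levelRaising ℓ (k * d) := by
  induction k with
  | zero => simpa using one_mem_levelRaising_zero
  | succ k ih => simpa [pow_succ, add_mul] using mul_mem_levelRaising ih hM

end Matrix

theorem Submodule.commute_of_mem_span {R A : Type*} [CommSemiring R] [Semiring A] [Algebra R A]
    {s : Set A} (hs : ∀ x ∈ s, ∀ y ∈ s, Commute x y) {x y : A} (hx : x ∈ span R s)
    (hy : y ∈ span R s) : Commute x y := by
  refine Algebra.commute_of_mem_adjoin_of_forall_mem_commute (Algebra.span_le_adjoin R s hy) ?_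
  exact fun z hz => (Algebra.commute_of_mem_adjoin_of_forall_mem_commute
    (Algebra.span_le_adjoin R s hx) fun w hw => hs z hz w hw).symm

section CalabiYau

variable {N : ℕ}

@[simp] lemma cyBlk₁_ne_cyFst (j : Fin N) : cyBlk₁ j ≠ cyFst N := by
  simp [cyBlk₁, cyFst, Fin.ext_iff]

@[simp] lemma cyBlk₂_ne_cyFst (j : Fin N) : cyBlk₂ j ≠ cyFst N := by
  simp [cyBlk₂, cyFst, Fin.ext_iff]

@[simp] lemma cyLst_ne_cyFst : cyLst N ≠ cyFst N := by
  simp [cyLst, cyFst, Fin.ext_iff]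

@[simp] lemma cyBlk₁_ne_cyBlk₂ (j k : Fin N) : cyBlk₁ j ≠ cyBlk₂ k := by
  simp [cyBlk₁, cyBlk₂, Fin.ext_iff]; omega

@[simp] lemma cyBlk₂_ne_cyBlk₁ (j k : Fin N) : cyBlk₂ j ≠ cyBlk₁ k := by
  simp [cyBlk₁, cyBlk₂, Fin.ext_iff]; omega

@[simp] lemma cyLst_ne_cyBlk₁ (j : Fin N) : cyLst N ≠ cyBlk₁ j := by
  simp [cyLst, cyBlk₁, Fin.ext_iff]; omega

@[simp] lemma cyLst_ne_cyBlk₂ (j : Fin N) : cyLst N ≠ cyBlk₂ j := by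
  simp [cyLst, cyBlk₂, Fin.ext_iff]; omega

@[simp] lemma cyBlk₁_inj {j k : Fin N} : cyBlk₁ j = cyBlk₁ k ↔ j = k := by
  simp [cyBlk₁, Fin.ext_iff]

@[simp] lemma cyBlk₂_inj {j k : Fin N} : cyBlk₂ j = cyBlk₂ k ↔ j = k := by
  simp [cyBlk₂, Fin.ext_iff]

theorem cyE_eq_sum_single (C : Fin N → Fin N → Fin N → ℂ) (i : Fin N) :
    cyE C i = Matrix.single (cyFst N) (cyBlk₁ i) 1 +
      ∑ p : Fin N, ∑ q : Fin N, Matrix.single (cyBlk₁ p) (cyBlk₂ q) (C i p q) +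
      Matrix.single (cyBlk₂ i) (cyLst N) 1 := by
  ext a b
  simp only [cyE, Matrix.add_apply, Matrix.sum_apply, Matrix.single, Matrix.of_apply, eq_comm]

theorem cyE_mul_cyE (C : Fin N → Fin N → Fin N → ℂ) (i j : Fin N) :
    cyE C i * cyE C j =
      ∑ q : Fin N, Matrix.single (cyFst N) (cyBlk₂ q) (C j i q) +
      ∑ p : Fin N, Matrix.single (cyBlk₁ p) (cyLst N) (C i p j) := by
  simp [cyE_eq_sum_single, add_mul, mul_add, Finset.sum_mul, Finset.mul_sum,
    Matrix.single_mul_single]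

theorem cyE_commute {C : Fin N → Fin N → Fin N → ℂ} (hC : cySymm C) (i j : Fin N) :
    Commute (cyE C i) (cyE C j) := by
  obtain ⟨hC₁₂, hC₂₃⟩ := hC
  have hC₁₃ (p : Fin N) : C i p j = C j p i := by rw [hC₁₂, hC₂₃, hC₁₂]
  simp only [Commute, SemiconjBy, cyE_mul_cyE, hC₁₂ j i, hC₁₃]

def cyLevel (N : ℕ) (a : Fin (2 * N + 2)) : ℕ :=
  if a.1 = 0 then 0 else if a.1 ≤ N then 1 else if a.1 ≤ 2 * N then 2 else 3

theorem cyLevel_lt_four (a : Fin (2 * N + 2)) : cyLevel N a < 4 := by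
  unfold cyLevel; split_ifs <;> omega

@[simp] lemma cyLevel_cyFst : cyLevel N (cyFst N) = 0 := rfl

@[simp] lemma cyLevel_cyBlk₁ (j : Fin N) : cyLevel N (cyBlk₁ j) = 1 := by
  rw [cyLevel, if_neg (by simp [cyBlk₁]), if_pos (by simp [cyBlk₁]; omega)]

@[simp] lemma cyLevel_cyBlk₂ (j : Fin N) : cyLevel N (cyBlk₂ j) = 2 := by
  rw [cyLevel, if_neg (by simp [cyBlk₂]), if_neg (by simp [cyBlk₂]; omega),
    if_pos (by simp [cyBlk₂]; omega)]

@[simp] lemma cyLevel_cyLst : cyLevel N (cyLst N) = 3 := by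
  rw [cyLevel, if_neg (by simp [cyLst]), if_neg (by simp [cyLst]; omega), if_neg (by simp [cyLst])]

theorem cyE_mem_levelRaising (C : Fin N → Fin N → Fin N → ℂ) (i : Fin N) :
    cyE C i ∈ Matrix.levelRaising (cyLevel N) 1 := by
  rw [cyE_eq_sum_single]
  refine add_mem (add_mem ?_ (sum_mem fun p _ => sum_mem fun q _ => ?_)) ?_ <;>
    exact Matrix.single_mem_levelRaising (by simp) _

end CalabiYau

theorem cy_commute_general (N : ℕ) (C : Fin N → Fin N → Fin N → ℂ)
    (hC : cySymm C) :
    (∀ i j : Fin N, cyE C i * cyE C j = cyE C j * cyE C i) ∧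
    (∀ x ∈ Submodule.span ℂ (Set.range (cyE C)),
      ∀ y ∈ Submodule.span ℂ (Set.range (cyE C)), ⁅x, y⁆ = 0) ∧
    (∀ t : Fin N → ℂ, (∑ i : Fin N, t i • cyE C i) ^ 4 = 0) := by
  refine ⟨cyE_commute hC, fun x hx y hy => ?_, fun t => ?_⟩
  · refine (Submodule.commute_of_mem_span ?_ hx hy).lie_eq
    rintro _ ⟨i, rfl⟩ _ ⟨j, rfl⟩
    exact cyE_commute hC i j
  · have hsum : ∑ i, t i • cyE C i ∈ Matrix.levelRaising (cyLevel N) 1 :=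
      sum_mem fun i _ => Submodule.smul_mem _ _ (cyE_mem_levelRaising C i)
    exact Matrix.eq_zero_of_mem_levelRaising (Matrix.pow_mem_levelRaising hsum 4) cyLevel_lt_four

/-- The matrices `E_1, …, E_N` pairwise commute; hence their complex span
`𝔞 = span_ℂ{E_1, …, E_N}` is an abelian Lie subalgebra of `M_{2N+2}(ℂ)`
(every Lie bracket of elements of the span vanishes); moreover every element
of `𝔞` is nilpotent: `(Σ t_i E_i)⁴ = 0`. -/
theorem cy_commute (N : ℕ) (hN : 1 ≤ N) (C : Fin N → Fin N → Fin N → ℂ)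
    (hC : cySymm C) :
    (∀ i j : Fin N, cyE C i * cyE C j = cyE C j * cyE C i) ∧
    (∀ x ∈ Submodule.span ℂ (Set.range (cyE C)),
      ∀ y ∈ Submodule.span ℂ (Set.range (cyE C)), ⁅x, y⁆ = 0) ∧
    (∀ t : Fin N → ℂ, (∑ i : Fin N, t i • cyE C i) ^ 4 = 0) :=
  cy_commute_general N C hC
end

section
/- Let (q_{ik,j̄l̄})_{1 ≤ i,k,j,l ≤ N} be complex numbers symmetric under exchanging i ↔ k and under exchanging j ↔ l, and suppose q : ℂ^N → ℂ is smooth with q(t) = 1 − Σ_{i=1}^N t_i t̄_i + (1/4) Σ_{i,j,k,l} q_{ik,j̄l̄} t_i t_k t̄_j t̄_l + R(t), where R vanishes to order 5 at 0. Then for all 1 ≤ i, j, k, l ≤ N: ∂_i ∂̄_j g_{kl̄}(0) = δ_{ij} δ_{kl} + δ_{il} δ_{kj} − q_{ik,j̄l̄}, while ∂_i ∂_j g_{kl̄}(0) = 0 and ∂̄_i ∂̄_j g_{kl̄}(0) = 0. (Since the first Wirtinger derivatives of g vanish at 0, this computes the full curvature tensor at 0 of the Kähler metric with potential −log q: R_{ij̄kl̄}(0)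 = ∂_i ∂̄_j g_{kl̄}(0).) -/
noncomputable section

/-- The `k`-th standard basis vector of `ℂ^N`. -/
def ebas {N : ℕ} (k : Fin N) : Fin N → ℂ := Pi.single k 1

/-- The Wirtinger derivative `∂_k f = ½(∂f/∂x_k − √−1 ∂f/∂y_k)` of a function
`f : ℂ^N → ℂ`, expressed through the real Fréchet derivative of `f`:
`∂f/∂x_k = Df(e_k)` and `∂f/∂y_k = Df(√−1 e_k)`. -/
def wdz {N : ℕ} (k : Fin N) (f : (Fin N → ℂ) → ℂ) (x : Fin N → ℂ) : ℂ :=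
  (1 / 2) * (fderiv ℝ f x (ebas k) - Complex.I * fderiv ℝ f x (Complex.I • ebas k))

/-- The conjugate Wirtinger derivative `∂̄_k f = ½(∂f/∂x_k + √−1 ∂f/∂y_k)`. -/
def wdzbar {N : ℕ} (k : Fin N) (f : (Fin N → ℂ) → ℂ) (x : Fin N → ℂ) : ℂ :=
  (1 / 2) * (fderiv ℝ f x (ebas k) + Complex.I * fderiv ℝ f x (Complex.I • ebas k))

/-- A function `R : ℂ^N → ℂ` vanishes to order `m` at `0` if `R(0) = 0` and all of its
real partial derivatives of order `< m` vanish at `0`. -/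
def vanishesToOrder {N : ℕ} (m : ℕ) (R : (Fin N → ℂ) → ℂ) : Prop :=
  ∀ j < m, iteratedFDeriv ℝ j R 0 = 0

/-- The coordinate expression `g_{k l̄} = q⁻²(∂_k q · ∂̄_l q − q · ∂_k ∂̄_l q)` of the
Weil–Petersson metric with Kähler potential `− log q`. -/
def gWP {N : ℕ} (q : (Fin N → ℂ) → ℂ) (k l : Fin N) (x : Fin N → ℂ) : ℂ :=
  (wdz k q x * wdzbar l q x - q x * wdz k (wdzbar l q) x) / (q x) ^ 2

section Aux

open Complex Filter Topology

variable {N : ℕ} {f g : (Fin N → ℂ) → ℂ} {x : Fin N → ℂ} {k : Fin N} {c : ℂ}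

lemma wdz_add (hf : DifferentiableAt ℝ f x) (hg : DifferentiableAt ℝ g x) :
    wdz k (fun t => f t + g t) x = wdz k f x + wdz k g x := by
  simp only [wdz, fderiv_fun_add hf hg, ContinuousLinearMap.add_apply]; ring

lemma wdzbar_add (hf : DifferentiableAt ℝ f x) (hg : DifferentiableAt ℝ g x) :
    wdzbar k (fun t => f t + g t) x = wdzbar k f x + wdzbar k g x := by
  simp only [wdzbar, fderiv_fun_add hf hg, ContinuousLinearMap.add_apply]; ring

lemma wdz_sub (hf : DifferentiableAt ℝ f x) (hg : DifferentiableAt ℝ g x) :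
    wdz k (fun t => f t - g t) x = wdz k f x - wdz k g x := by
  simp only [wdz, fderiv_fun_sub hf hg, ContinuousLinearMap.sub_apply]; ring

lemma wdzbar_sub (hf : DifferentiableAt ℝ f x) (hg : DifferentiableAt ℝ g x) :
    wdzbar k (fun t => f t - g t) x = wdzbar k f x - wdzbar k g x := by
  simp only [wdzbar, fderiv_fun_sub hf hg, ContinuousLinearMap.sub_apply]; ring

lemma wdz_const : wdz k (fun _ => c) x = 0 := by
  simp [wdz, fderiv_const]

lemma wdzbar_const : wdzbar k (fun _ => c) x = 0 := by
  simp [wdzbar, fderiv_const]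

lemma wdz_mul (hf : DifferentiableAt ℝ f x) (hg : DifferentiableAt ℝ g x) :
    wdz k (fun t => f t * g t) x = wdz k f x * g x + f x * wdz k g x := by
  simp only [wdz, fderiv_fun_mul hf hg, ContinuousLinearMap.add_apply,
    ContinuousLinearMap.smul_apply, smul_eq_mul]; ring

lemma wdzbar_mul (hf : DifferentiableAt ℝ f x) (hg : DifferentiableAt ℝ g x) :
    wdzbar k (fun t => f t * g t) x = wdzbar k f x * g x + f x * wdzbar k g x := by
  simp only [wdzbar, fderiv_fun_mul hf hg, ContinuousLinearMap.add_apply,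
    ContinuousLinearMap.smul_apply, smul_eq_mul]; ring

lemma wdz_const_mul (hf : DifferentiableAt ℝ f x) :
    wdz k (fun t => c * f t) x = c * wdz k f x :=
  (wdz_mul (differentiableAt_const c) hf).trans (by simp [wdz_const])

lemma wdzbar_const_mul (hf : DifferentiableAt ℝ f x) :
    wdzbar k (fun t => c * f t) x = c * wdzbar k f x :=
  (wdzbar_mul (differentiableAt_const c) hf).trans (by simp [wdzbar_const])

lemma wdz_sum {ι : Type*} (s : Finset ι) (F : ι → (Fin N → ℂ) → ℂ)
    (hF : ∀ i ∈ s, DifferentiableAt ℝ (F i) x) :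
    wdz k (fun t => ∑ i ∈ s, F i t) x = ∑ i ∈ s, wdz k (F i) x := by
  simp only [wdz, fderiv_fun_sum hF, ContinuousLinearMap.sum_apply]
  simp only [Finset.mul_sum]
  rw [← Finset.sum_sub_distrib, Finset.mul_sum]

lemma wdzbar_sum {ι : Type*} (s : Finset ι) (F : ι → (Fin N → ℂ) → ℂ)
    (hF : ∀ i ∈ s, DifferentiableAt ℝ (F i) x) :
    wdzbar k (fun t => ∑ i ∈ s, F i t) x = ∑ i ∈ s, wdzbar k (F i) x := by
  simp only [wdzbar, fderiv_fun_sum hF, ContinuousLinearMap.sum_apply]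
  simp only [Finset.mul_sum]
  rw [← Finset.sum_add_distrib, Finset.mul_sum]

lemma wdz_congr_nhds (h : f =ᶠ[𝓝 x] g) : wdz k f x = wdz k g x := by
  simp only [wdz, h.fderiv_eq]

lemma wdzbar_congr_nhds (h : f =ᶠ[𝓝 x] g) : wdzbar k f x = wdzbar k g x := by
  simp only [wdzbar, h.fderiv_eq]

@[fun_prop]
lemma diff_coord (a : Fin N) : Differentiable ℝ (fun t : Fin N → ℂ => t a) := by fun_prop

@[fun_prop]
lemma diff_conj_coord (a : Fin N) :
    Differentiable ℝ (fun t : Fin N → ℂ => (starRingEnd ℂ) (t a)) := by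
  rw [show (fun t : Fin N → ℂ => (starRingEnd ℂ) (t a)) =
    (Complex.conjCLE.toContinuousLinearMap.comp (ContinuousLinearMap.proj (R := ℝ)
    (φ := fun _ : Fin N => ℂ) a)) from rfl]
  exact ContinuousLinearMap.differentiable _

lemma fderiv_coord (a : Fin N) (x : Fin N → ℂ) (v : Fin N → ℂ) :
    fderiv ℝ (fun t : Fin N → ℂ => t a) x v = v a := by
  rw [show (fun t : Fin N → ℂ => t a) = (ContinuousLinearMap.proj (R := ℝ)
    (φ := fun _ : Fin N => ℂ) a) from rfl, ContinuousLinearMap.fderiv]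
  rfl

lemma fderiv_conj_coord (a : Fin N) (x : Fin N → ℂ) (v : Fin N → ℂ) :
    fderiv ℝ (fun t : Fin N → ℂ => (starRingEnd ℂ) (t a)) x v = (starRingEnd ℂ) (v a) := by
  rw [show (fun t : Fin N → ℂ => (starRingEnd ℂ) (t a)) =
    (Complex.conjCLE.toContinuousLinearMap.comp (ContinuousLinearMap.proj (R := ℝ)
    (φ := fun _ : Fin N => ℂ) a)) from rfl, ContinuousLinearMap.fderiv]
  rfl

lemma ebas_apply (c a : Fin N) : ebas c a = if c = a then 1 else 0 := by
  simp [ebas, Pi.single_apply, eq_comm]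

lemma wdz_coord (c a : Fin N) : wdz c (fun t => t a) x = if c = a then 1 else 0 := by
  simp only [wdz, fderiv_coord, Pi.smul_apply, smul_eq_mul, ebas_apply]
  rcases eq_or_ne c a with h | h <;> simp [h, Complex.I_mul_I] <;> norm_num

lemma wdzbar_coord (c a : Fin N) : wdzbar c (fun t => t a) x = 0 := by
  simp only [wdzbar, fderiv_coord, Pi.smul_apply, smul_eq_mul, ebas_apply]
  rcases eq_or_ne c a with h | h <;> simp [h] <;> norm_num

lemma wdz_conj_coord (c a : Fin N) : wdz c (fun t => (starRingEnd ℂ) (t a)) x = 0 := by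
  simp only [wdz, fderiv_conj_coord, Pi.smul_apply, smul_eq_mul, ebas_apply]
  rcases eq_or_ne c a with h | h <;> simp [h] <;> norm_num

lemma wdzbar_conj_coord (c a : Fin N) :
    wdzbar c (fun t => (starRingEnd ℂ) (t a)) x = if c = a then 1 else 0 := by
  simp only [wdzbar, fderiv_conj_coord, Pi.smul_apply, smul_eq_mul, ebas_apply]
  rcases eq_or_ne c a with h | h <;> simp [h] <;> norm_num

/-- The CLM computing `wdz` from the Fréchet derivative. -/
def wdzCLM (k : Fin N) : ((Fin N → ℂ) →L[ℝ] ℂ) →L[ℝ] ℂ :=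
  (1 / 2 : ℂ) • (ContinuousLinearMap.apply ℝ ℂ (ebas k)
    - Complex.I • ContinuousLinearMap.apply ℝ ℂ (Complex.I • ebas k))

def wdzbarCLM (k : Fin N) : ((Fin N → ℂ) →L[ℝ] ℂ) →L[ℝ] ℂ :=
  (1 / 2 : ℂ) • (ContinuousLinearMap.apply ℝ ℂ (ebas k)
    + Complex.I • ContinuousLinearMap.apply ℝ ℂ (Complex.I • ebas k))

lemma wdz_eq_clm (k : Fin N) (f : (Fin N → ℂ) → ℂ) :
    wdz k f = fun x => wdzCLM k (fderiv ℝ f x) := by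
  funext x
  simp [wdz, wdzCLM, smul_eq_mul, mul_sub]

lemma wdzbar_eq_clm (k : Fin N) (f : (Fin N → ℂ) → ℂ) :
    wdzbar k f = fun x => wdzbarCLM k (fderiv ℝ f x) := by
  funext x
  simp [wdzbar, wdzbarCLM, smul_eq_mul, mul_add]

lemma contDiff_wdz (hf : ContDiff ℝ (⊤ : ℕ∞) f) : ContDiff ℝ (⊤ : ℕ∞) (wdz k f) := by
  rw [wdz_eq_clm]
  exact (wdzCLM k).contDiff.comp (hf.fderiv_right (by simp))

lemma contDiff_wdzbar (hf : ContDiff ℝ (⊤ : ℕ∞) f) : ContDiff ℝ (⊤ : ℕ∞) (wdzbar k f) := by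
  rw [wdzbar_eq_clm]
  exact (wdzbarCLM k).contDiff.comp (hf.fderiv_right (by simp))

lemma vto_fderiv {m : ℕ} (h : vanishesToOrder (m + 1) f) :
    ∀ j < m, iteratedFDeriv ℝ j (fderiv ℝ f) 0 = 0 := by
  intro j hj
  apply ContinuousMultilinearMap.ext; intro v
  apply ContinuousLinearMap.ext; intro w
  have h2 := iteratedFDeriv_succ_apply_right (𝕜 := ℝ) (f := f) (x := (0 : Fin N → ℂ))
    (Fin.snoc v w)
  rw [h (j+1) (by omega)] at h2
  simpa using h2.symm

lemma vto_wdz {m : ℕ} (hf : ContDiff ℝ (⊤ : ℕ∞) f) (h : vanishesToOrder (m + 1) f) :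
    vanishesToOrder m (wdz k f) := by
  intro j hj
  rw [wdz_eq_clm]
  have : (fun x => wdzCLM k (fderiv ℝ f x)) = (wdzCLM k) ∘ (fderiv ℝ f) := rfl
  rw [this, ContinuousLinearMap.iteratedFDeriv_comp_left _ (hf.fderiv_right (m := ((⊤ : ℕ∞) : WithTop ℕ∞)) (by exact_mod_cast le_top)).contDiffAt (by exact_mod_cast le_top),
    vto_fderiv h j hj]
  ext v
  simp

lemma vto_wdzbar {m : ℕ} (hf : ContDiff ℝ (⊤ : ℕ∞) f) (h : vanishesToOrder (m + 1) f) :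
    vanishesToOrder m (wdzbar k f) := by
  intro j hj
  rw [wdzbar_eq_clm]
  have : (fun x => wdzbarCLM k (fderiv ℝ f x)) = (wdzbarCLM k) ∘ (fderiv ℝ f) := rfl
  rw [this, ContinuousLinearMap.iteratedFDeriv_comp_left _ (hf.fderiv_right (m := ((⊤ : ℕ∞) : WithTop ℕ∞)) (by exact_mod_cast le_top)).contDiffAt (by exact_mod_cast le_top),
    vto_fderiv h j hj]
  ext v
  simp

lemma vto_zero_at_zero {m : ℕ} (h : vanishesToOrder (m + 1) f) : f 0 = 0 := by
  have h0 := h 0 (by omega)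
  have := congrFun (congrArg DFunLike.coe h0) (fun _ => 0)
  simpa using this

lemma fderiv_inv_comp (hg : DifferentiableAt ℝ g x) (hx : g x ≠ 0) (v : Fin N → ℂ) :
    fderiv ℝ (fun t => (g t)⁻¹) x v = -((g x)⁻¹ * fderiv ℝ g x v * (g x)⁻¹) := by
  have h := ((hasFDerivAt_inv' (𝕜 := ℝ) hx).comp x hg.hasFDerivAt).fderiv
  rw [show (fun t => (g t)⁻¹) = Inv.inv ∘ g from rfl, h]
  simp [ContinuousLinearMap.mulLeftRight_apply]

lemma wdz_inv (hg : DifferentiableAt ℝ g x) (hx : g x ≠ 0) :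
    wdz k (fun t => (g t)⁻¹) x = -(wdz k g x) / (g x) ^ 2 := by
  simp only [wdz, fderiv_inv_comp hg hx]
  field_simp
  ring

lemma wdzbar_inv (hg : DifferentiableAt ℝ g x) (hx : g x ≠ 0) :
    wdzbar k (fun t => (g t)⁻¹) x = -(wdzbar k g x) / (g x) ^ 2 := by
  simp only [wdzbar, fderiv_inv_comp hg hx]
  field_simp
  ring


@[fun_prop]
lemma contDiff_conj_coord (a : Fin N) :
    ContDiff ℝ (⊤ : ℕ∞) (fun t : Fin N → ℂ => (starRingEnd ℂ) (t a)) := by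
  rw [show (fun t : Fin N → ℂ => (starRingEnd ℂ) (t a)) =
    (Complex.conjCLE.toContinuousLinearMap.comp (ContinuousLinearMap.proj (R := ℝ)
    (φ := fun _ : Fin N => ℂ) a)) from rfl]
  exact ContinuousLinearMap.contDiff _

example (Q : Fin N → Fin N → Fin N → Fin N → ℂ) :
    ContDiff ℝ (⊤ : ℕ∞) (fun t : Fin N → ℂ => ∑ i, ∑ k, ∑ j, ∑ l, Q i k j l * t i * t k
      * (starRingEnd ℂ) (t j) * (starRingEnd ℂ) (t l)) := by
  apply ContDiff.sum (fun i _ => ?_)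
  apply ContDiff.sum (fun k _ => ?_)
  apply ContDiff.sum (fun j _ => ?_)
  apply ContDiff.sum (fun l _ => ?_)
  fun_prop

example : ContDiff ℝ (⊤ : ℕ∞) (fun t : Fin N → ℂ => ∑ m, t m * (starRingEnd ℂ) (t m)) := by
  apply ContDiff.sum (fun m _ => ?_)
  fun_prop

section layers

@[fun_prop]
lemma diffAt_conj_coord (a : Fin N) (x : Fin N → ℂ) :
    DifferentiableAt ℝ (fun t : Fin N → ℂ => (starRingEnd ℂ) (t a)) x :=
  (diff_conj_coord a).differentiableAt

variable (Qc : Fin N → Fin N → Fin N → Fin N → ℂ)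

lemma wdz_sum1 (F : Fin N → (Fin N → ℂ) → ℂ) (hF : ∀ i, Differentiable ℝ (F i)) :
    wdz k (fun t => ∑ i, F i t) x = ∑ i, wdz k (F i) x :=
  wdz_sum Finset.univ F (fun i _ => (hF i).differentiableAt)

lemma wdzbar_sum1 (F : Fin N → (Fin N → ℂ) → ℂ) (hF : ∀ i, Differentiable ℝ (F i)) :
    wdzbar k (fun t => ∑ i, F i t) x = ∑ i, wdzbar k (F i) x :=
  wdzbar_sum Finset.univ F (fun i _ => (hF i).differentiableAt)

lemma wdz_sum2 (F : Fin N → Fin N → (Fin N → ℂ) → ℂ) (hF : ∀ i j, Differentiable ℝ (F i j)) :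
    wdz k (fun t => ∑ i, ∑ j, F i j t) x = ∑ i, ∑ j, wdz k (F i j) x := by
  rw [wdz_sum1 _ (fun i => Differentiable.fun_sum (fun j _ => hF i j))]
  exact Finset.sum_congr rfl fun i _ => wdz_sum1 _ (hF i)

lemma wdzbar_sum2 (F : Fin N → Fin N → (Fin N → ℂ) → ℂ) (hF : ∀ i j, Differentiable ℝ (F i j)) :
    wdzbar k (fun t => ∑ i, ∑ j, F i j t) x = ∑ i, ∑ j, wdzbar k (F i j) x := by
  rw [wdzbar_sum1 _ (fun i => Differentiable.fun_sum (fun j _ => hF i j))]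
  exact Finset.sum_congr rfl fun i _ => wdzbar_sum1 _ (hF i)

lemma wdz_sum3 (F : Fin N → Fin N → Fin N → (Fin N → ℂ) → ℂ)
    (hF : ∀ i j l, Differentiable ℝ (F i j l)) :
    wdz k (fun t => ∑ i, ∑ j, ∑ l, F i j l t) x = ∑ i, ∑ j, ∑ l, wdz k (F i j l) x := by
  rw [wdz_sum1 _ (fun i => Differentiable.fun_sum (fun j _ =>
    Differentiable.fun_sum (fun l _ => hF i j l)))]
  exact Finset.sum_congr rfl fun i _ => wdz_sum2 _ (hF i)

lemma wdzbar_sum3 (F : Fin N → Fin N → Fin N → (Fin N → ℂ) → ℂ)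
    (hF : ∀ i j l, Differentiable ℝ (F i j l)) :
    wdzbar k (fun t => ∑ i, ∑ j, ∑ l, F i j l t) x = ∑ i, ∑ j, ∑ l, wdzbar k (F i j l) x := by
  rw [wdzbar_sum1 _ (fun i => Differentiable.fun_sum (fun j _ =>
    Differentiable.fun_sum (fun l _ => hF i j l)))]
  exact Finset.sum_congr rfl fun i _ => wdzbar_sum2 _ (hF i)

lemma wdz_sum4 (F : Fin N → Fin N → Fin N → Fin N → (Fin N → ℂ) → ℂ)
    (hF : ∀ i j l m, Differentiable ℝ (F i j l m)) :
    wdz k (fun t => ∑ i, ∑ j, ∑ l, ∑ m, F i j l m t) x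
      = ∑ i, ∑ j, ∑ l, ∑ m, wdz k (F i j l m) x := by
  rw [wdz_sum1 _ (fun i => Differentiable.fun_sum (fun j _ => Differentiable.fun_sum (fun l _ =>
    Differentiable.fun_sum (fun m _ => hF i j l m))))]
  exact Finset.sum_congr rfl fun i _ => wdz_sum3 _ (hF i)

lemma wdzbar_sum4 (F : Fin N → Fin N → Fin N → Fin N → (Fin N → ℂ) → ℂ)
    (hF : ∀ i j l m, Differentiable ℝ (F i j l m)) :
    wdzbar k (fun t => ∑ i, ∑ j, ∑ l, ∑ m, F i j l m t) x
      = ∑ i, ∑ j, ∑ l, ∑ m, wdzbar k (F i j l m) x := by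
  rw [wdzbar_sum1 _ (fun i => Differentiable.fun_sum (fun j _ => Differentiable.fun_sum (fun l _ =>
    Differentiable.fun_sum (fun m _ => hF i j l m))))]
  exact Finset.sum_congr rfl fun i _ => wdzbar_sum3 _ (hF i)

lemma m4B (d a b u v : Fin N) (C : ℂ) :
    wdzbar d (fun t => C * t a * t b * (starRingEnd ℂ) (t u) * (starRingEnd ℂ) (t v)) x
      = C * x a * x b * (if d = u then 1 else 0) * (starRingEnd ℂ) (x v)
        + C * x a * x b * (starRingEnd ℂ) (x u) * (if d = v then 1 else 0) := by
  rw [wdzbar_mul (by fun_prop) (by fun_prop), wdzbar_mul (by fun_prop) (by fun_prop),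
    wdzbar_mul (by fun_prop) (by fun_prop), wdzbar_const_mul (by fun_prop)]
  simp only [wdzbar_coord, wdzbar_conj_coord]
  ring

lemma m4D (d a b u v : Fin N) (C : ℂ) :
    wdz d (fun t => C * t a * t b * (starRingEnd ℂ) (t u) * (starRingEnd ℂ) (t v)) x
      = (C * (if d = a then 1 else 0) * x b + C * x a * (if d = b then 1 else 0))
          * (starRingEnd ℂ) (x u) * (starRingEnd ℂ) (x v) := by
  rw [wdz_mul (by fun_prop) (by fun_prop), wdz_mul (by fun_prop) (by fun_prop),
    wdz_mul (by fun_prop) (by fun_prop), wdz_const_mul (by fun_prop)]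
  simp only [wdz_coord, wdz_conj_coord]
  ring

end layers

section Tlayers

variable (Qc : Fin N → Fin N → Fin N → Fin N → ℂ)

-- monomial lemmas for lower-degree shapes
lemma m3B (b i k j : Fin N) (C : ℂ) :
    wdzbar b (fun t => C * (t i * t k * (starRingEnd ℂ) (t j))) x
      = C * (x i * x k) * (if b = j then 1 else 0) := by
  rw [wdzbar_const_mul (by fun_prop), wdzbar_mul (by fun_prop) (by fun_prop),
    wdzbar_mul (by fun_prop) (by fun_prop)]
  simp only [wdzbar_coord, wdzbar_conj_coord]
  ring

lemma m3D (c i k j : Fin N) (C : ℂ) :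
    wdz c (fun t => C * (t i * t k * (starRingEnd ℂ) (t j))) x
      = C * ((if c = i then 1 else 0) * x k + x i * (if c = k then 1 else 0))
          * (starRingEnd ℂ) (x j) := by
  rw [wdz_const_mul (by fun_prop), wdz_mul (by fun_prop) (by fun_prop),
    wdz_mul (by fun_prop) (by fun_prop)]
  simp only [wdz_coord, wdz_conj_coord]
  ring

lemma m3B' (b k j l : Fin N) (C : ℂ) :
    wdzbar b (fun t => C * (t k * (starRingEnd ℂ) (t j) * (starRingEnd ℂ) (t l))) x
      = C * (x k * ((if b = j then 1 else 0) * (starRingEnd ℂ) (x l)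
          + (starRingEnd ℂ) (x j) * (if b = l then 1 else 0))) := by
  rw [wdzbar_const_mul (by fun_prop), wdzbar_mul (by fun_prop) (by fun_prop),
    wdzbar_mul (by fun_prop) (by fun_prop)]
  simp only [wdzbar_coord, wdzbar_conj_coord]
  ring

lemma m3D' (a k j l : Fin N) (C : ℂ) :
    wdz a (fun t => C * (t k * (starRingEnd ℂ) (t j) * (starRingEnd ℂ) (t l))) x
      = C * ((if a = k then 1 else 0) * ((starRingEnd ℂ) (x j) * (starRingEnd ℂ) (x l))) := by
  rw [wdz_const_mul (by fun_prop), wdz_mul (by fun_prop) (by fun_prop),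
    wdz_mul (by fun_prop) (by fun_prop)]
  simp only [wdz_coord, wdz_conj_coord]
  ring

lemma m2B (b i j : Fin N) (C : ℂ) :
    wdzbar b (fun t => C * (t i * (starRingEnd ℂ) (t j))) x
      = C * (x i * (if b = j then 1 else 0)) := by
  rw [wdzbar_const_mul (by fun_prop), wdzbar_mul (by fun_prop) (by fun_prop)]
  simp only [wdzbar_coord, wdzbar_conj_coord]
  ring

lemma m2D (a i j : Fin N) (C : ℂ) :
    wdz a (fun t => C * (t i * (starRingEnd ℂ) (t j))) x
      = C * ((if a = i then 1 else 0) * (starRingEnd ℂ) (x j)) := by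
  rw [wdz_const_mul (by fun_prop), wdz_mul (by fun_prop) (by fun_prop)]
  simp only [wdz_coord, wdz_conj_coord]
  ring

lemma m1D (a i : Fin N) (C : ℂ) :
    wdz a (fun t => C * t i) x = C * (if a = i then 1 else 0) := by
  rw [wdz_const_mul (by fun_prop)]
  simp [wdz_coord]

lemma m1B (a i : Fin N) (C : ℂ) :
    wdzbar a (fun t => C * t i) x = 0 := by
  rw [wdzbar_const_mul (by fun_prop)]
  simp [wdzbar_coord]

lemma S_B (d : Fin N) : wdzbar d (fun t => ∑ m, t m * (starRingEnd ℂ) (t m)) x = x d := by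
  rw [wdzbar_sum1 _ (fun m => by fun_prop)]
  have e : ∀ m : Fin N, wdzbar d (fun t => t m * (starRingEnd ℂ) (t m)) x
      = x m * (if d = m then 1 else 0) := fun m => by
    rw [wdzbar_mul (by fun_prop) (by fun_prop)]
    simp [wdzbar_coord, wdzbar_conj_coord]
  simp [e, mul_ite, Finset.sum_ite_eq]

lemma S_D (c : Fin N) : wdz c (fun t => ∑ m, t m * (starRingEnd ℂ) (t m)) x
    = (starRingEnd ℂ) (x c) := by
  rw [wdz_sum1 _ (fun m => by fun_prop)]
  have e : ∀ m : Fin N, wdz c (fun t => t m * (starRingEnd ℂ) (t m)) x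
      = (if c = m then 1 else 0) * (starRingEnd ℂ) (x m) := fun m => by
    rw [wdz_mul (by fun_prop) (by fun_prop)]
    simp [wdz_coord, wdz_conj_coord]
  simp [e, ite_mul, Finset.sum_ite_eq]

lemma T_B (d : Fin N) :
    wdzbar d (fun t => ∑ i, ∑ k, ∑ j, ∑ l, Qc i k j l * t i * t k
      * (starRingEnd ℂ) (t j) * (starRingEnd ℂ) (t l)) x
    = ∑ i, ∑ k, ∑ j, (Qc i k d j + Qc i k j d) * (x i * x k * (starRingEnd ℂ) (x j)) := by
  rw [wdzbar_sum4 _ (fun i k j l => by fun_prop)]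
  simp only [m4B]
  simp [Finset.sum_add_distrib, mul_ite, ite_mul, mul_zero, zero_mul, mul_one, one_mul,
    Finset.sum_ite_eq, Finset.mem_univ]
  rw [← Finset.sum_add_distrib]
  refine Finset.sum_congr rfl fun i _ => ?_
  rw [← Finset.sum_add_distrib]
  refine Finset.sum_congr rfl fun k' _ => ?_
  rw [← Finset.sum_add_distrib]
  refine Finset.sum_congr rfl fun j _ => ?_
  ring

lemma T_D (c : Fin N) :
    wdz c (fun t => ∑ i, ∑ k, ∑ j, ∑ l, Qc i k j l * t i * t k
      * (starRingEnd ℂ) (t j) * (starRingEnd ℂ) (t l)) x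
    = ∑ k, ∑ j, ∑ l, (Qc c k j l + Qc k c j l)
        * (x k * (starRingEnd ℂ) (x j) * (starRingEnd ℂ) (x l)) := by
  rw [wdz_sum4 _ (fun i k j l => by fun_prop)]
  simp only [m4D]
  simp [Finset.sum_add_distrib, mul_ite, ite_mul, add_mul, mul_zero, zero_mul, mul_one, one_mul,
    Finset.sum_ite_eq, Finset.mem_univ, mul_assoc]

lemma T_DB (c d : Fin N) :
    wdz c (fun t => ∑ i, ∑ k, ∑ j, (Qc i k d j + Qc i k j d)
      * (t i * t k * (starRingEnd ℂ) (t j))) x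
    = ∑ i, ∑ j, ((Qc c i d j + Qc c i j d) + (Qc i c d j + Qc i c j d))
        * (x i * (starRingEnd ℂ) (x j)) := by
  rw [wdz_sum3 _ (fun i k j => by fun_prop)]
  simp only [m3D]
  simp [Finset.sum_add_distrib, mul_ite, ite_mul, add_mul, mul_add, mul_zero, zero_mul,
    mul_one, one_mul, Finset.sum_ite_eq, Finset.mem_univ, mul_assoc]

lemma T_BB0 (b d : Fin N) :
    wdzbar b (fun t => ∑ i, ∑ k, ∑ j, (Qc i k d j + Qc i k j d)
      * (t i * t k * (starRingEnd ℂ) (t j))) 0 = 0 := by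
  rw [wdzbar_sum3 _ (fun i k j => by fun_prop)]
  simp only [m3B]
  simp

lemma T_DD0 (a c : Fin N) :
    wdz a (fun t => ∑ k, ∑ j, ∑ l, (Qc c k j l + Qc k c j l)
      * (t k * (starRingEnd ℂ) (t j) * (starRingEnd ℂ) (t l))) 0 = 0 := by
  rw [wdz_sum3 _ (fun kk j l => by fun_prop)]
  simp only [m3D']
  simp

lemma T_BD0 (b c : Fin N) :
    wdzbar b (fun t => ∑ k, ∑ j, ∑ l, (Qc c k j l + Qc k c j l)
      * (t k * (starRingEnd ℂ) (t j) * (starRingEnd ℂ) (t l))) 0 = 0 := by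
  rw [wdzbar_sum3 _ (fun kk j l => by fun_prop)]
  simp only [m3B']
  simp

lemma T_BDB (b c d : Fin N) :
    wdzbar b (fun t => ∑ i, ∑ j, ((Qc c i d j + Qc c i j d) + (Qc i c d j + Qc i c j d))
      * (t i * (starRingEnd ℂ) (t j))) x
    = ∑ i, ((Qc c i d b + Qc c i b d) + (Qc i c d b + Qc i c b d)) * x i := by
  rw [wdzbar_sum2 _ (fun i j => by fun_prop)]
  simp only [m2B]
  simp [mul_ite, ite_mul, mul_zero, zero_mul, mul_one, Finset.sum_ite_eq, Finset.mem_univ,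
    mul_assoc]

lemma T_DDB (a c d : Fin N) :
    wdz a (fun t => ∑ i, ∑ j, ((Qc c i d j + Qc c i j d) + (Qc i c d j + Qc i c j d))
      * (t i * (starRingEnd ℂ) (t j))) x
    = ∑ j, ((Qc c a d j + Qc c a j d) + (Qc a c d j + Qc a c j d)) * (starRingEnd ℂ) (x j) := by
  rw [wdz_sum2 _ (fun i j => by fun_prop)]
  simp only [m2D]
  simp [mul_ite, ite_mul, mul_zero, zero_mul, mul_one, one_mul, Finset.sum_ite_eq,
    Finset.mem_univ, mul_assoc]

lemma T_D_BDB (a b c d : Fin N) :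
    wdz a (fun t => ∑ i, ((Qc c i d b + Qc c i b d) + (Qc i c d b + Qc i c b d)) * t i) x
    = (Qc c a d b + Qc c a b d) + (Qc a c d b + Qc a c b d) := by
  rw [wdz_sum1 _ (fun i => by fun_prop)]
  simp only [m1D]
  simp [mul_ite, mul_one, mul_zero, Finset.sum_ite_eq, Finset.mem_univ]

lemma T_B_BDB (a b c d : Fin N) :
    wdzbar a (fun t => ∑ i, ((Qc c i d b + Qc c i b d) + (Qc i c d b + Qc i c b d)) * t i) x
    = 0 := by
  rw [wdzbar_sum1 _ (fun i => by fun_prop)]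
  simp only [m1B]
  simp

lemma T_D_DDB (a' b c d : Fin N) :
    wdz a' (fun t => ∑ j, ((Qc c b d j + Qc c b j d) + (Qc b c d j + Qc b c j d))
      * (starRingEnd ℂ) (t j)) x = 0 := by
  rw [wdz_sum1 _ (fun j => by fun_prop)]
  have e : ∀ j : Fin N, wdz a' (fun t => ((Qc c b d j + Qc c b j d) + (Qc b c d j + Qc b c j d))
      * (starRingEnd ℂ) (t j)) x = 0 := fun j => by
    rw [wdz_const_mul (by fun_prop)]
    simp [wdz_conj_coord]
  simp [e]

end Tlayers

lemma wdz_neg : wdz k (fun t => -(f t)) x = -(wdz k f x) := by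
  simp only [wdz, fderiv_fun_neg, ContinuousLinearMap.neg_apply]; ring

lemma wdzbar_neg : wdzbar k (fun t => -(f t)) x = -(wdzbar k f x) := by
  simp only [wdzbar, fderiv_fun_neg, ContinuousLinearMap.neg_apply]; ring

lemma wdz_div (hf : DifferentiableAt ℝ f x) (hg : DifferentiableAt ℝ g x) (hx : g x ≠ 0) :
    wdz k (fun t => f t / g t) x = (wdz k f x * g x - f x * wdz k g x) / g x ^ 2 := by
  simp only [div_eq_mul_inv]
  rw [wdz_mul hf (hg.fun_inv hx), wdz_inv hg hx]
  field_simp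
  ring

lemma wdzbar_div (hf : DifferentiableAt ℝ f x) (hg : DifferentiableAt ℝ g x) (hx : g x ≠ 0) :
    wdzbar k (fun t => f t / g t) x = (wdzbar k f x * g x - f x * wdzbar k g x) / g x ^ 2 := by
  simp only [div_eq_mul_inv]
  rw [wdzbar_mul hf (hg.fun_inv hx), wdzbar_inv hg hx]
  field_simp
  ring

open Topology in
lemma main_div_DB (A den : (Fin N → ℂ) → ℂ) (hA : ContDiff ℝ (⊤ : ℕ∞) A) (hden : ContDiff ℝ (⊤ : ℕ∞) den)
    (hne : ∀ᶠ x in 𝓝 (0 : Fin N → ℂ), den x ≠ 0) (hden0 : den 0 = 1)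
    (i j : Fin N) (hBA0 : wdzbar j A 0 = 0) (hBden0 : wdzbar j den 0 = 0)
    (hDA0 : wdz i A 0 = 0) :
    wdz i (wdzbar j (fun x => A x / den x)) 0
      = wdz i (wdzbar j A) 0 - A 0 * wdz i (wdzbar j den) 0 := by
  have hAd := hA.differentiable (by simp)
  have hdend := hden.differentiable (by simp)
  have hBAd := (contDiff_wdzbar (k := j) (f := A) hA).differentiable (by simp)
  have hBdend := (contDiff_wdzbar (k := j) (f := den) hden).differentiable (by simp)
  have hev : wdzbar j (fun x => A x / den x) =ᶠ[𝓝 (0 : Fin N → ℂ)]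
      fun x => (wdzbar j A x * den x - A x * wdzbar j den x) / den x ^ 2 := by
    filter_upwards [hne] with x hx
    exact wdzbar_div (hAd x) (hdend x) hx
  rw [wdz_congr_nhds hev]
  rw [wdz_div (((hBAd 0).fun_mul (hdend 0)).fun_sub ((hAd 0).fun_mul (hBdend 0)))
      ((hdend 0).fun_pow 2) (by simp [hden0])]
  rw [wdz_sub ((hBAd 0).fun_mul (hdend 0)) ((hAd 0).fun_mul (hBdend 0)),
      wdz_mul (hBAd 0) (hdend 0), wdz_mul (hAd 0) (hBdend 0)]
  simp [hden0, hBA0, hBden0, hDA0]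

open Topology in
lemma main_div_DD (A den : (Fin N → ℂ) → ℂ) (hA : ContDiff ℝ (⊤ : ℕ∞) A) (hden : ContDiff ℝ (⊤ : ℕ∞) den)
    (hne : ∀ᶠ x in 𝓝 (0 : Fin N → ℂ), den x ≠ 0) (hden0 : den 0 = 1)
    (i j : Fin N) (hBA0 : wdz j A 0 = 0) (hBden0 : wdz j den 0 = 0)
    (hDA0 : wdz i A 0 = 0) :
    wdz i (wdz j (fun x => A x / den x)) 0
      = wdz i (wdz j A) 0 - A 0 * wdz i (wdz j den) 0 := by
  have hAd := hA.differentiable (by simp)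
  have hdend := hden.differentiable (by simp)
  have hBAd := (contDiff_wdz (k := j) (f := A) hA).differentiable (by simp)
  have hBdend := (contDiff_wdz (k := j) (f := den) hden).differentiable (by simp)
  have hev : wdz j (fun x => A x / den x) =ᶠ[𝓝 (0 : Fin N → ℂ)]
      fun x => (wdz j A x * den x - A x * wdz j den x) / den x ^ 2 := by
    filter_upwards [hne] with x hx
    exact wdz_div (hAd x) (hdend x) hx
  rw [wdz_congr_nhds hev]
  rw [wdz_div (((hBAd 0).fun_mul (hdend 0)).fun_sub ((hAd 0).fun_mul (hBdend 0)))
      ((hdend 0).fun_pow 2) (by simp [hden0])]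
  rw [wdz_sub ((hBAd 0).fun_mul (hdend 0)) ((hAd 0).fun_mul (hBdend 0)),
      wdz_mul (hBAd 0) (hdend 0), wdz_mul (hAd 0) (hBdend 0)]
  simp [hden0, hBA0, hBden0, hDA0]

open Topology in
lemma main_div_BB (A den : (Fin N → ℂ) → ℂ) (hA : ContDiff ℝ (⊤ : ℕ∞) A) (hden : ContDiff ℝ (⊤ : ℕ∞) den)
    (hne : ∀ᶠ x in 𝓝 (0 : Fin N → ℂ), den x ≠ 0) (hden0 : den 0 = 1)
    (i j : Fin N) (hBA0 : wdzbar j A 0 = 0) (hBden0 : wdzbar j den 0 = 0)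
    (hDA0 : wdzbar i A 0 = 0) :
    wdzbar i (wdzbar j (fun x => A x / den x)) 0
      = wdzbar i (wdzbar j A) 0 - A 0 * wdzbar i (wdzbar j den) 0 := by
  have hAd := hA.differentiable (by simp)
  have hdend := hden.differentiable (by simp)
  have hBAd := (contDiff_wdzbar (k := j) (f := A) hA).differentiable (by simp)
  have hBdend := (contDiff_wdzbar (k := j) (f := den) hden).differentiable (by simp)
  have hev : wdzbar j (fun x => A x / den x) =ᶠ[𝓝 (0 : Fin N → ℂ)]
      fun x => (wdzbar j A x * den x - A x * wdzbar j den x) / den x ^ 2 := by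
    filter_upwards [hne] with x hx
    exact wdzbar_div (hAd x) (hdend x) hx
  rw [wdzbar_congr_nhds hev]
  rw [wdzbar_div (((hBAd 0).fun_mul (hdend 0)).fun_sub ((hAd 0).fun_mul (hBdend 0)))
      ((hdend 0).fun_pow 2) (by simp [hden0])]
  rw [wdzbar_sub ((hBAd 0).fun_mul (hdend 0)) ((hAd 0).fun_mul (hBdend 0)),
      wdzbar_mul (hBAd 0) (hdend 0), wdzbar_mul (hAd 0) (hBdend 0)]
  simp [hden0, hBA0, hBden0, hDA0]

set_option maxHeartbeats 1600000 in
theorem wp_curvature_aux (N : ℕ) (hN : 1 ≤ N)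
    (Q : Fin N → Fin N → Fin N → Fin N → ℂ)
    (hQ₁ : ∀ i k j l, Q i k j l = Q k i j l)
    (hQ₂ : ∀ i k j l, Q i k j l = Q i k l j)
    (q R : (Fin N → ℂ) → ℂ) (hq : ContDiff ℝ (⊤ : ℕ∞) q)
    (hR : vanishesToOrder 5 R)
    (hqR : ∀ t : Fin N → ℂ,
      q t = 1 - (∑ i : Fin N, t i * (starRingEnd ℂ) (t i)) +
        (1 / 4) * (∑ i : Fin N, ∑ k : Fin N, ∑ j : Fin N, ∑ l : Fin N,
          Q i k j l * t i * t k * (starRingEnd ℂ) (t j) * (starRingEnd ℂ) (t l)) +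
        R t) :
    (∀ i j k l : Fin N,
      wdz i (wdzbar j (fun x => (wdz k q x * wdzbar l q x - q x * wdz k (wdzbar l q) x)
        / q x ^ 2)) 0 =
        (if i = j ∧ k = l then 1 else 0) + (if i = l ∧ k = j then 1 else 0) - Q i k j l) ∧
    (∀ i j k l : Fin N, wdz i (wdz j (fun x => (wdz k q x * wdzbar l q x
      - q x * wdz k (wdzbar l q) x) / q x ^ 2)) 0 = 0) ∧
    (∀ i j k l : Fin N, wdzbar i (wdzbar j (fun x => (wdz k q x * wdzbar l q x
      - q x * wdz k (wdzbar l q) x) / q x ^ 2)) 0 = 0) := by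
  -- smoothness of R
  have hRd : ContDiff ℝ (⊤ : ℕ∞) R := by
    have e : R = fun t => q t - (1 - (∑ i : Fin N, t i * (starRingEnd ℂ) (t i)) +
        (1 / 4) * (∑ i : Fin N, ∑ k : Fin N, ∑ j : Fin N, ∑ l : Fin N,
          Q i k j l * t i * t k * (starRingEnd ℂ) (t j) * (starRingEnd ℂ) (t l))) := by
      funext t; rw [hqR t]; ring
    rw [e]
    apply hq.sub
    apply ContDiff.add
    · exact ContDiff.sub contDiff_const (ContDiff.sum (fun m _ => by fun_prop))
    · exact ContDiff.mul contDiff_const (ContDiff.sum (fun i _ => ContDiff.sum (fun k _ =>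
        ContDiff.sum (fun j _ => ContDiff.sum (fun l _ => by fun_prop)))))
  have hq_eq : q = fun t => 1 - (∑ i : Fin N, t i * (starRingEnd ℂ) (t i)) +
      (1 / 4) * (∑ i : Fin N, ∑ k : Fin N, ∑ j : Fin N, ∑ l : Fin N,
        Q i k j l * t i * t k * (starRingEnd ℂ) (t j) * (starRingEnd ℂ) (t l)) +
      R t := funext hqR
  have hRdiff : Differentiable ℝ R := hRd.differentiable (by simp)
  -- R string facts
  have cR_B : ∀ d, ContDiff ℝ (⊤ : ℕ∞) (wdzbar d R) := fun d => contDiff_wdzbar hRd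
  have cR_D : ∀ c, ContDiff ℝ (⊤ : ℕ∞) (wdz c R) := fun c => contDiff_wdz hRd
  have cR_DB : ∀ c d, ContDiff ℝ (⊤ : ℕ∞) (wdz c (wdzbar d R)) := fun c d => contDiff_wdz (cR_B d)
  have vtoR_B : ∀ d, vanishesToOrder 4 (wdzbar d R) := fun d => vto_wdzbar hRd hR
  have vtoR_D : ∀ c, vanishesToOrder 4 (wdz c R) := fun c => vto_wdz hRd hR
  have vtoR_DB : ∀ c d, vanishesToOrder 3 (wdz c (wdzbar d R)) :=
    fun c d => vto_wdz (cR_B d) (vtoR_B d)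
  have vR0 : R 0 = 0 := vto_zero_at_zero (m := 4) hR
  have vR_B : ∀ d, wdzbar d R 0 = 0 := fun d => vto_zero_at_zero (m := 3) (vtoR_B d)
  have vR_D : ∀ c, wdz c R 0 = 0 := fun c => vto_zero_at_zero (m := 3) (vtoR_D c)
  have vR_DB : ∀ c d, wdz c (wdzbar d R) 0 = 0 :=
    fun c d => vto_zero_at_zero (m := 2) (vtoR_DB c d)
  have vR_DD : ∀ c d, wdz c (wdz d R) 0 = 0 :=
    fun c d => vto_zero_at_zero (m := 2) (vto_wdz (cR_D d) (vtoR_D d))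
  have vR_BD : ∀ c d, wdzbar c (wdz d R) 0 = 0 :=
    fun c d => vto_zero_at_zero (m := 2) (vto_wdzbar (cR_D d) (vtoR_D d))
  have vR_BB : ∀ c d, wdzbar c (wdzbar d R) 0 = 0 :=
    fun c d => vto_zero_at_zero (m := 2) (vto_wdzbar (cR_B d) (vtoR_B d))
  have vR_DDB : ∀ b c d, wdz b (wdz c (wdzbar d R)) 0 = 0 :=
    fun b c d => vto_zero_at_zero (m := 1) (vto_wdz (cR_DB c d) (vtoR_DB c d))
  have vR_BDB : ∀ b c d, wdzbar b (wdz c (wdzbar d R)) 0 = 0 :=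
    fun b c d => vto_zero_at_zero (m := 1) (vto_wdzbar (cR_DB c d) (vtoR_DB c d))
  have vR_DBDB : ∀ a b c d, wdz a (wdzbar b (wdz c (wdzbar d R))) 0 = 0 :=
    fun a b c d => vto_zero_at_zero (m := 0)
      (vto_wdz (contDiff_wdzbar (cR_DB c d)) (vto_wdzbar (cR_DB c d) (vtoR_DB c d)))
  have vR_BBDB : ∀ a b c d, wdzbar a (wdzbar b (wdz c (wdzbar d R))) 0 = 0 :=
    fun a b c d => vto_zero_at_zero (m := 0)
      (vto_wdzbar (contDiff_wdzbar (cR_DB c d)) (vto_wdzbar (cR_DB c d) (vtoR_DB c d)))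
  have vR_DDDB : ∀ a b c d, wdz a (wdz b (wdz c (wdzbar d R))) 0 = 0 :=
    fun a b c d => vto_zero_at_zero (m := 0)
      (vto_wdz (contDiff_wdz (cR_DB c d)) (vto_wdz (cR_DB c d) (vtoR_DB c d)))
  -- first layer functions
  have hFB : ∀ d, wdzbar d q = fun t => -(t d) +
      (1 / 4 : ℂ) * (∑ i, ∑ k, ∑ j, (Q i k d j + Q i k j d)
        * (t i * t k * (starRingEnd ℂ) (t j))) + wdzbar d R t := by
    intro d; funext y
    rw [hq_eq]
    rw [wdzbar_add (by fun_prop) (hRdiff _)]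
    rw [wdzbar_add (by fun_prop) (by fun_prop)]
    rw [wdzbar_sub (by fun_prop) (by fun_prop)]
    rw [wdzbar_const, wdzbar_const_mul (by fun_prop), S_B, T_B]
    ring
  have hFD : ∀ c, wdz c q = fun t => -((starRingEnd ℂ) (t c)) +
      (1 / 4 : ℂ) * (∑ k, ∑ j, ∑ l, (Q c k j l + Q k c j l)
        * (t k * (starRingEnd ℂ) (t j) * (starRingEnd ℂ) (t l))) + wdz c R t := by
    intro c; funext y
    rw [hq_eq]
    rw [wdz_add (by fun_prop) (hRdiff _)]
    rw [wdz_add (by fun_prop) (by fun_prop)]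
    rw [wdz_sub (by fun_prop) (by fun_prop)]
    rw [wdz_const, wdz_const_mul (by fun_prop), S_D, T_D]
    ring
  have hFDB : ∀ c d, wdz c (wdzbar d q) = fun t => -(if c = d then (1 : ℂ) else 0) +
      (1 / 4 : ℂ) * (∑ i, ∑ j, ((Q c i d j + Q c i j d) + (Q i c d j + Q i c j d))
        * (t i * (starRingEnd ℂ) (t j))) + wdz c (wdzbar d R) t := by
    intro c d; funext y
    rw [hFB d]
    rw [wdz_add (by fun_prop) ((cR_B d).differentiable (by simp) _)]
    rw [wdz_add (by fun_prop) (by fun_prop)]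
    rw [wdz_neg, wdz_coord, wdz_const_mul (by fun_prop), T_DB]
  have hFBDB : ∀ b c d, wdzbar b (wdz c (wdzbar d q)) = fun t =>
      (1 / 4 : ℂ) * (∑ i, ((Q c i d b + Q c i b d) + (Q i c d b + Q i c b d)) * t i)
        + wdzbar b (wdz c (wdzbar d R)) t := by
    intro b c d; funext y
    rw [hFDB c d]
    rw [wdzbar_add (by fun_prop) ((cR_DB c d).differentiable (by simp) _)]
    rw [wdzbar_add (by fun_prop) (by fun_prop)]
    rw [wdzbar_const, wdzbar_const_mul (by fun_prop), T_BDB]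
    ring
  have hFDDB : ∀ b c d, wdz b (wdz c (wdzbar d q)) = fun t =>
      (1 / 4 : ℂ) * (∑ j, ((Q c b d j + Q c b j d) + (Q b c d j + Q b c j d))
        * (starRingEnd ℂ) (t j)) + wdz b (wdz c (wdzbar d R)) t := by
    intro b c d; funext y
    rw [hFDB c d]
    rw [wdz_add (by fun_prop) ((cR_DB c d).differentiable (by simp) _)]
    rw [wdz_add (by fun_prop) (by fun_prop)]
    rw [wdz_const, wdz_const_mul (by fun_prop), T_DDB]
    ring
  -- q string values at 0
  have vq0 : q 0 = 1 := by rw [hqR 0]; simp [vR0]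
  have vB : ∀ d, wdzbar d q 0 = 0 := by
    intro d; rw [hFB d]; simp [vR_B d]
  have vD : ∀ c, wdz c q 0 = 0 := by
    intro c; rw [hFD c]; simp [vR_D c]
  have vDB : ∀ c d, wdz c (wdzbar d q) 0 = -(if c = d then (1 : ℂ) else 0) := by
    intro c d; rw [hFDB c d]; simp [vR_DB c d]
  have vBD : ∀ c d, wdzbar c (wdz d q) 0 = -(if c = d then (1 : ℂ) else 0) := by
    intro c d
    rw [hFD d]
    rw [wdzbar_add (by fun_prop) ((cR_D d).differentiable (by simp) _)]
    rw [wdzbar_add (by fun_prop) (by fun_prop)]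
    rw [wdzbar_neg, wdzbar_conj_coord, wdzbar_const_mul (by fun_prop), T_BD0, vR_BD]
    ring
  have vDD : ∀ c d, wdz c (wdz d q) 0 = 0 := by
    intro c d
    rw [hFD d]
    rw [wdz_add (by fun_prop) ((cR_D d).differentiable (by simp) _)]
    rw [wdz_add (by fun_prop) (by fun_prop)]
    rw [wdz_neg, wdz_conj_coord, wdz_const_mul (by fun_prop), T_DD0, vR_DD]
    ring
  have vBB : ∀ c d, wdzbar c (wdzbar d q) 0 = 0 := by
    intro c d
    rw [hFB d]
    rw [wdzbar_add (by fun_prop) ((cR_B d).differentiable (by simp) _)]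
    rw [wdzbar_add (by fun_prop) (by fun_prop)]
    rw [wdzbar_neg, wdzbar_coord, wdzbar_const_mul (by fun_prop), T_BB0, vR_BB]
    ring
  have vDDB : ∀ b c d, wdz b (wdz c (wdzbar d q)) 0 = 0 := by
    intro b c d; rw [hFDDB b c d]; simp [vR_DDB b c d]
  have vBDB : ∀ b c d, wdzbar b (wdz c (wdzbar d q)) 0 = 0 := by
    intro b c d; rw [hFBDB b c d]; simp [vR_BDB b c d]
  have v4DBDB : ∀ a b c d, wdz a (wdzbar b (wdz c (wdzbar d q))) 0 = Q a c b d := by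
    intro a b c d
    rw [hFBDB b c d]
    rw [wdz_add (by fun_prop)
      ((contDiff_wdzbar (cR_DB c d)).differentiable (by simp) _)]
    rw [wdz_const_mul (by fun_prop), T_D_BDB, vR_DBDB]
    rw [hQ₁ c a d b, hQ₁ c a b d, hQ₂ a c d b]
    ring
  have v4DDDB : ∀ a b c d, wdz a (wdz b (wdz c (wdzbar d q))) 0 = 0 := by
    intro a b c d
    rw [hFDDB b c d]
    rw [wdz_add (by fun_prop)
      ((contDiff_wdz (cR_DB c d)).differentiable (by simp) _)]
    rw [wdz_const_mul (by fun_prop), T_D_DDB, vR_DDDB]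
    ring
  have v4BBDB : ∀ a b c d, wdzbar a (wdzbar b (wdz c (wdzbar d q))) 0 = 0 := by
    intro a b c d
    rw [hFBDB b c d]
    rw [wdzbar_add (by fun_prop)
      ((contDiff_wdzbar (cR_DB c d)).differentiable (by simp) _)]
    rw [wdzbar_const_mul (by fun_prop), T_B_BDB, vR_BBDB]
    ring
  -- differentiability shorthands
  have dq : Differentiable ℝ q := hq.differentiable (by simp)
  have cDq : ∀ a, ContDiff ℝ (⊤ : ℕ∞) (wdz a q) := fun a => contDiff_wdz hq
  have cBq : ∀ a, ContDiff ℝ (⊤ : ℕ∞) (wdzbar a q) := fun a => contDiff_wdzbar hq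
  have cDBq : ∀ a b, ContDiff ℝ (⊤ : ℕ∞) (wdz a (wdzbar b q)) := fun a b => contDiff_wdz (cBq b)
  have dDq : ∀ a, Differentiable ℝ (wdz a q) := fun a => (cDq a).differentiable (by simp)
  have dBq : ∀ a, Differentiable ℝ (wdzbar a q) := fun a => (cBq a).differentiable (by simp)
  have dDBq : ∀ a b, Differentiable ℝ (wdz a (wdzbar b q)) :=
    fun a b => (cDBq a b).differentiable (by simp)
  have dBDq : ∀ a b, Differentiable ℝ (wdzbar a (wdz b q)) :=
    fun a b => (contDiff_wdzbar (cDq b)).differentiable (by simp)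
  have dBBq : ∀ a b, Differentiable ℝ (wdzbar a (wdzbar b q)) :=
    fun a b => (contDiff_wdzbar (cBq b)).differentiable (by simp)
  have dDDq : ∀ a b, Differentiable ℝ (wdz a (wdz b q)) :=
    fun a b => (contDiff_wdz (cDq b)).differentiable (by simp)
  have dBDBq : ∀ a b c, Differentiable ℝ (wdzbar a (wdz b (wdzbar c q))) :=
    fun a b c => (contDiff_wdzbar (cDBq b c)).differentiable (by simp)
  have dDDBq : ∀ a b c, Differentiable ℝ (wdz a (wdz b (wdzbar c q))) :=
    fun a b c => (contDiff_wdz (cDBq b c)).differentiable (by simp)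
  -- denominator facts
  have hden_C : ContDiff ℝ (⊤ : ℕ∞) (fun x => q x ^ 2) := hq.pow 2
  have e2 : (fun x : Fin N → ℂ => q x ^ 2) = fun x => q x * q x := by
    funext y; ring
  have hne : ∀ᶠ x in nhds (0 : Fin N → ℂ), q x ^ 2 ≠ 0 := by
    have h1 : ∀ᶠ x in nhds (0 : Fin N → ℂ), q x ≠ 0 :=
      (hq.continuous.continuousAt).eventually_ne (by rw [vq0]; exact one_ne_zero)
    filter_upwards [h1] with y hy using pow_ne_zero 2 hy
  have vBden : ∀ b, wdzbar b (fun x => q x ^ 2) 0 = 0 := by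
    intro b
    rw [e2, wdzbar_mul (dq 0) (dq 0), vB b, vq0]; ring
  have vDden : ∀ a, wdz a (fun x => q x ^ 2) 0 = 0 := by
    intro a
    rw [e2, wdz_mul (dq 0) (dq 0), vD a, vq0]; ring
  have hBden_fn : ∀ b, wdzbar b (fun x => q x ^ 2)
      = fun y => wdzbar b q y * q y + q y * wdzbar b q y := by
    intro b; funext y
    rw [e2, wdzbar_mul (dq y) (dq y)]
  have hDden_fn : ∀ b, wdz b (fun x => q x ^ 2)
      = fun y => wdz b q y * q y + q y * wdz b q y := by
    intro b; funext y
    rw [e2, wdz_mul (dq y) (dq y)]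
  have vDBden : ∀ a b, wdz a (wdzbar b (fun x => q x ^ 2)) 0
      = -2 * (if a = b then (1 : ℂ) else 0) := by
    intro a b
    rw [hBden_fn b,
      wdz_add ((dBq b 0).fun_mul (dq 0)) ((dq 0).fun_mul (dBq b 0)),
      wdz_mul (dBq b 0) (dq 0), wdz_mul (dq 0) (dBq b 0),
      vDB a b, vB b, vD a, vq0]
    ring
  have vDDden : ∀ a b, wdz a (wdz b (fun x => q x ^ 2)) 0 = 0 := by
    intro a b
    rw [hDden_fn b,
      wdz_add ((dDq b 0).fun_mul (dq 0)) ((dq 0).fun_mul (dDq b 0)),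
      wdz_mul (dDq b 0) (dq 0), wdz_mul (dq 0) (dDq b 0),
      vDD a b, vD b, vD a, vq0]
    ring
  have vBBden : ∀ a b, wdzbar a (wdzbar b (fun x => q x ^ 2)) 0 = 0 := by
    intro a b
    rw [hBden_fn b,
      wdzbar_add ((dBq b 0).fun_mul (dq 0)) ((dq 0).fun_mul (dBq b 0)),
      wdzbar_mul (dBq b 0) (dq 0), wdzbar_mul (dq 0) (dBq b 0),
      vBB a b, vB b, vB a, vq0]
    ring
  -- numerator facts
  have hA_C : ∀ k l, ContDiff ℝ (⊤ : ℕ∞)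
      (fun x => wdz k q x * wdzbar l q x - q x * wdz k (wdzbar l q) x) :=
    fun k l => ((cDq k).mul (cBq l)).sub (hq.mul (cDBq k l))
  have vA0 : ∀ k l, wdz k q 0 * wdzbar l q 0 - q 0 * wdz k (wdzbar l q) 0
      = (if k = l then (1 : ℂ) else 0) := by
    intro k l
    rw [vD k, vB l, vq0, vDB k l]; ring
  have vBA : ∀ b k l,
      wdzbar b (fun x => wdz k q x * wdzbar l q x - q x * wdz k (wdzbar l q) x) 0 = 0 := by
    intro b k l
    rw [wdzbar_sub ((dDq k 0).fun_mul (dBq l 0)) ((dq 0).fun_mul (dDBq k l 0)),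
      wdzbar_mul (dDq k 0) (dBq l 0), wdzbar_mul (dq 0) (dDBq k l 0),
      vBD b k, vB l, vD k, vBB b l, vB b, vDB k l, vq0, vBDB b k l]
    ring
  have vDA : ∀ a k l,
      wdz a (fun x => wdz k q x * wdzbar l q x - q x * wdz k (wdzbar l q) x) 0 = 0 := by
    intro a k l
    rw [wdz_sub ((dDq k 0).fun_mul (dBq l 0)) ((dq 0).fun_mul (dDBq k l 0)),
      wdz_mul (dDq k 0) (dBq l 0), wdz_mul (dq 0) (dDBq k l 0),
      vDD a k, vB l, vD k, vDB a l, vD a, vDB k l, vq0, vDDB a k l]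
    ring
  have hBA_fn : ∀ b k l,
      wdzbar b (fun x => wdz k q x * wdzbar l q x - q x * wdz k (wdzbar l q) x)
      = fun y => (wdzbar b (wdz k q) y * wdzbar l q y + wdz k q y * wdzbar b (wdzbar l q) y)
        - (wdzbar b q y * wdz k (wdzbar l q) y + q y * wdzbar b (wdz k (wdzbar l q)) y) := by
    intro b k l; funext y
    rw [wdzbar_sub ((dDq k y).fun_mul (dBq l y)) ((dq y).fun_mul (dDBq k l y)),
      wdzbar_mul (dDq k y) (dBq l y), wdzbar_mul (dq y) (dDBq k l y)]
  have hDA_fn : ∀ b k l,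
      wdz b (fun x => wdz k q x * wdzbar l q x - q x * wdz k (wdzbar l q) x)
      = fun y => (wdz b (wdz k q) y * wdzbar l q y + wdz k q y * wdz b (wdzbar l q) y)
        - (wdz b q y * wdz k (wdzbar l q) y + q y * wdz b (wdz k (wdzbar l q)) y) := by
    intro b k l; funext y
    rw [wdz_sub ((dDq k y).fun_mul (dBq l y)) ((dq y).fun_mul (dDBq k l y)),
      wdz_mul (dDq k y) (dBq l y), wdz_mul (dq y) (dDBq k l y)]
  refine ⟨?_, ?_, ?_⟩
  · -- mixed case
    intro i j k l
    rw [main_div_DB _ _ (hA_C k l) hden_C hne (by simp [vq0]) i j (vBA j k l) (vBden j)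
      (vDA i k l)]
    beta_reduce
    rw [hBA_fn j k l]
    rw [wdz_sub (((dBDq j k 0).fun_mul (dBq l 0)).fun_add ((dDq k 0).fun_mul (dBBq j l 0)))
        (((dBq j 0).fun_mul (dDBq k l 0)).fun_add ((dq 0).fun_mul (dBDBq j k l 0))),
      wdz_add ((dBDq j k 0).fun_mul (dBq l 0)) ((dDq k 0).fun_mul (dBBq j l 0)),
      wdz_add ((dBq j 0).fun_mul (dDBq k l 0)) ((dq 0).fun_mul (dBDBq j k l 0)),
      wdz_mul (dBDq j k 0) (dBq l 0), wdz_mul (dDq k 0) (dBBq j l 0),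
      wdz_mul (dBq j 0) (dDBq k l 0), wdz_mul (dq 0) (dBDBq j k l 0)]
    rw [vB l, vBD j k, vDB i l, vDD i k, vBB j l, vD k, vDB i j, vDB k l, vB j, vD i, vq0,
      v4DBDB i j k l, vDBden i j]
    have ejk : (if j = k then (1 : ℂ) else 0) = if k = j then 1 else 0 := by simp [eq_comm]
    have e1 : (if i = j ∧ k = l then (1 : ℂ) else 0)
        = (if i = j then 1 else 0) * (if k = l then 1 else 0) := by
      rcases eq_or_ne i j with h | h <;> rcases eq_or_ne k l with h' | h' <;> simp [h, h']
    have e2 : (if i = l ∧ k = j then (1 : ℂ) else 0)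
        = (if i = l then 1 else 0) * (if k = j then 1 else 0) := by
      rcases eq_or_ne i l with h | h <;> rcases eq_or_ne k j with h' | h' <;> simp [h, h']
    rw [ejk, e1, e2]
    ring
  · -- holomorphic case
    intro i j k l
    rw [main_div_DD _ _ (hA_C k l) hden_C hne (by simp [vq0]) i j (vDA j k l) (vDden j)
      (vDA i k l)]
    beta_reduce
    rw [hDA_fn j k l]
    rw [wdz_sub (((dDDq j k 0).fun_mul (dBq l 0)).fun_add ((dDq k 0).fun_mul (dDBq j l 0)))
        (((dDq j 0).fun_mul (dDBq k l 0)).fun_add ((dq 0).fun_mul (dDDBq j k l 0))),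
      wdz_add ((dDDq j k 0).fun_mul (dBq l 0)) ((dDq k 0).fun_mul (dDBq j l 0)),
      wdz_add ((dDq j 0).fun_mul (dDBq k l 0)) ((dq 0).fun_mul (dDDBq j k l 0)),
      wdz_mul (dDDq j k 0) (dBq l 0), wdz_mul (dDq k 0) (dDBq j l 0),
      wdz_mul (dDq j 0) (dDBq k l 0), wdz_mul (dq 0) (dDDBq j k l 0)]
    rw [vB l, vDD j k, vDB i l, vDD i k, vDB j l, vD k, vDD i j, vDB k l, vD j, vD i, vq0,
      v4DDDB i j k l, vDDden i j]
    ring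
  · -- antiholomorphic case
    intro i j k l
    rw [main_div_BB _ _ (hA_C k l) hden_C hne (by simp [vq0]) i j (vBA j k l) (vBden j)
      (vBA i k l)]
    beta_reduce
    rw [hBA_fn j k l]
    rw [wdzbar_sub (((dBDq j k 0).fun_mul (dBq l 0)).fun_add ((dDq k 0).fun_mul (dBBq j l 0)))
        (((dBq j 0).fun_mul (dDBq k l 0)).fun_add ((dq 0).fun_mul (dBDBq j k l 0))),
      wdzbar_add ((dBDq j k 0).fun_mul (dBq l 0)) ((dDq k 0).fun_mul (dBBq j l 0)),
      wdzbar_add ((dBq j 0).fun_mul (dDBq k l 0)) ((dq 0).fun_mul (dBDBq j k l 0)),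
      wdzbar_mul (dBDq j k 0) (dBq l 0), wdzbar_mul (dDq k 0) (dBBq j l 0),
      wdzbar_mul (dBq j 0) (dDBq k l 0), wdzbar_mul (dq 0) (dBDBq j k l 0)]
    rw [vB l, vBD j k, vBB i l, vBD i k, vBB j l, vD k, vBB i j, vDB k l, vB j, vB i, vq0,
      v4BBDB i j k l, vBBden i j]
    ring

end Aux

/-- If `q(t) = 1 − Σ t_i t̄_i + ¼ Σ q_{ik,j̄l̄} t_i t_k t̄_j t̄_l + R(t)`, with the
coefficients `q_{ik,j̄l̄}` symmetric in `i ↔ k` and in `j ↔ l` and `R` vanishing to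
order `5` at `0`, then `∂_i ∂̄_j g_{k l̄}(0) = δ_{ij} δ_{kl} + δ_{il} δ_{kj} − q_{ik,j̄l̄}`,
while `∂_i ∂_j g_{k l̄}(0) = 0` and `∂̄_i ∂̄_j g_{k l̄}(0) = 0`.  (These are the values
of the full curvature tensor `R_{i j̄ k l̄}(0)` of the Kähler metric with potential
`− log q`.) -/
theorem wp_curvature (N : ℕ) (hN : 1 ≤ N)
    (Q : Fin N → Fin N → Fin N → Fin N → ℂ)
    (hQ₁ : ∀ i k j l, Q i k j l = Q k i j l)
    (hQ₂ : ∀ i k j l, Q i k j l = Q i k l j)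
    (q R : (Fin N → ℂ) → ℂ) (hq : ContDiff ℝ (⊤ : ℕ∞) q)
    (hR : vanishesToOrder 5 R)
    (hqR : ∀ t : Fin N → ℂ,
      q t = 1 - (∑ i : Fin N, t i * (starRingEnd ℂ) (t i)) +
        (1 / 4) * (∑ i : Fin N, ∑ k : Fin N, ∑ j : Fin N, ∑ l : Fin N,
          Q i k j l * t i * t k * (starRingEnd ℂ) (t j) * (starRingEnd ℂ) (t l)) +
        R t) :
    (∀ i j k l : Fin N,
      wdz i (wdzbar j (gWP q k l)) 0 =
        (if i = j ∧ k = l then 1 else 0) + (if i = l ∧ k = j then 1 else 0) - Q i k j l) ∧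
    (∀ i j k l : Fin N, wdz i (wdz j (gWP q k l)) 0 = 0) ∧
    (∀ i j k l : Fin N, wdzbar i (wdzbar j (gWP q k l)) 0 = 0) := by
  obtain ⟨h1, h2, h3⟩ := wp_curvature_aux N hN Q hQ₁ hQ₂ q R hq hR hqR
  refine ⟨fun i j k l => ?_, fun i j k l => ?_, fun i j k l => ?_⟩
  · rw [show gWP q k l = fun x => (wdz k q x * wdzbar l q x - q x * wdz k (wdzbar l q) x)
      / q x ^ 2 from rfl]
    exact h1 i j k l
  · rw [show gWP q k l = fun x => (wdz k q x * wdzbar l q x - q x * wdz k (wdzbar l q) x)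
      / q x ^ 2 from rfl]
    exact h2 i j k l
  · rw [show gWP q k l = fun x => (wdz k q x * wdzbar l q x - q x * wdz k (wdzbar l q) x)
      / q x ^ 2 from rfl]
    exact h3 i j k l
end
end

section
/- Let (q_{ik,j̄l̄}) be complex numbers symmetric in (i,k) and in (j,l), and suppose q : ℂ^N → ℂ is smooth with q(t) = 1 − Σ t_i t̄_i + (1/4) Σ q_{ik,j̄l̄} t_i t_k t̄_j t̄_l + R(t), where R vanishes to order 6 at 0 (i.e. the degree-5 part of the Weil–Petersson potential vanishes). Then every third-order Wirtinger derivative of every g_{kl̄} vanishes at the origin: for all indices i, j, r, k, l, each of ∂_r ∂_i ∂̄_j g_{kl̄}(0), ∂̄_r ∂_i ∂̄_j g_{kl̄}(0), ∂_r ∂_i ∂_j g_{kl̄}(0) and ∂̄_r ∂̄_i ∂̄_j g_{kl̄}(0) equals 0. (This is the computational core of the theorem that absence of weak quantum correction at every point forces ∇R = 0, i.e. the Teichmüller space with the Weil–Petersson metric is locally Hermitian symmetric.) -/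
noncomputable section

open Filter Topology Complex
open scoped ContDiff
noncomputable section AuxVO
variable {E : Type} [NormedAddCommGroup E] [NormedSpace ℝ E]
def VO {F : Type} [NormedAddCommGroup F] [NormedSpace ℝ F] (m : ℕ) (f : E → F) : Prop :=
  ∀ j < m, iteratedFDeriv ℝ j f 0 = 0
lemma VO.value {F : Type} [NormedAddCommGroup F] [NormedSpace ℝ F] {m : ℕ} {f : E → F}
    (h : VO (m + 1) f) : f 0 = 0 := by
  have h0 := h 0 (Nat.succ_pos m)
  have := congrArg (fun Φ : ContinuousMultilinearMap ℝ (fun _ : Fin 0 => E) F =>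
    Φ (fun _ => 0)) h0
  simpa [iteratedFDeriv_zero_apply] using this
lemma VO.mono {F : Type} [NormedAddCommGroup F] [NormedSpace ℝ F] {m m' : ℕ} {f : E → F}
    (h : VO m f) (hm : m' ≤ m) : VO m' f := fun j hj => h j (lt_of_lt_of_le hj hm)
lemma VO.fderivVO {F : Type} [NormedAddCommGroup F] [NormedSpace ℝ F] {m : ℕ} {f : E → F}
    (h : VO (m + 1) f) : VO m (fderiv ℝ f) := by
  intro j hj
  have h1 := h (j + 1) (by omega)
  have := norm_iteratedFDeriv_fderiv (𝕜 := ℝ) (f := f) (n := j) (x := (0 : E))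
  rw [h1] at this
  simpa using norm_eq_zero.1 (by simpa using this)
lemma VO.of_fderivVO {F : Type} [NormedAddCommGroup F] [NormedSpace ℝ F] {m : ℕ} {f : E → F}
    (h0 : f 0 = 0) (h : VO m (fderiv ℝ f)) : VO (m + 1) f := by
  intro j hj
  match j with
  | 0 => ext m; simp [iteratedFDeriv_zero_apply, h0]
  | (j + 1) =>
    have h1 := h j (by omega)
    have := norm_iteratedFDeriv_fderiv (𝕜 := ℝ) (f := f) (n := j) (x := (0 : E))
    rw [h1] at this
    simpa using norm_eq_zero.1 (by simpa using this.symm)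
lemma VO.addVO {F : Type} [NormedAddCommGroup F] [NormedSpace ℝ F] {m : ℕ} {f g : E → F}
    (hf : ContDiff ℝ ∞ f) (hg : ContDiff ℝ ∞ g)
    (h1 : VO m f) (h2 : VO m g) : VO m (fun x => f x + g x) := by
  intro j hj
  have := iteratedFDeriv_add_apply (𝕜 := ℝ) (i := j) (f := f) (g := g)
    (hf.contDiffAt.of_le (by exact_mod_cast (le_top : (j : ℕ∞) ≤ ⊤))) (hg.contDiffAt.of_le (by exact_mod_cast (le_top : (j : ℕ∞) ≤ ⊤))) (x := 0)
  rw [show (f + g) = fun x => f x + g x from rfl] at this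
  rw [this, h1 j hj, h2 j hj, add_zero]

lemma vo_bilinear (m : ℕ) : ∀ {F G H : Type} [NormedAddCommGroup F] [NormedSpace ℝ F]
    [NormedAddCommGroup G] [NormedSpace ℝ G] [NormedAddCommGroup H] [NormedSpace ℝ H]
    (B : F →L[ℝ] G →L[ℝ] H) (f : E → F) (g : E → G),
    ContDiff ℝ ∞ f → ContDiff ℝ ∞ g → VO m f → VO m (fun x => B (f x) (g x)) := by
  induction m with
  | zero => intro F G H _ _ _ _ _ _ B f g hf hg hv j hj; omega
  | succ m ih =>
    intro F G H _ _ _ _ _ _ B f g hf hg hv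
    have hdf : ContDiff ℝ ∞ (fderiv ℝ f) := hf.fderiv_right (by exact_mod_cast le_top)
    have hdg : ContDiff ℝ ∞ (fderiv ℝ g) := hg.fderiv_right (by exact_mod_cast le_top)
    refine VO.of_fderivVO ?_ ?_
    · have h0 : f 0 = 0 := hv.value
      simp [h0]
    · have hfd : fderiv ℝ (fun x => B (f x) (g x)) =
        fun x => (B.precompR E) (f x) (fderiv ℝ g x) + (B.precompL E) (fderiv ℝ f x) (g x) :=
        funext fun x => B.fderiv_of_bilinear
          (hf.differentiable (by simp) x)
          (hg.differentiable (by simp) x)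
      rw [hfd]
      refine VO.addVO ?_ ?_ ?_ ?_
      · exact (B.precompR E).isBoundedBilinearMap.contDiff.comp (ContDiff.prodMk hf hdg)
      · exact (B.precompL E).isBoundedBilinearMap.contDiff.comp (ContDiff.prodMk hdf hg)
      · exact ih (B.precompR E) f (fderiv ℝ g) hf hdg (hv.mono (Nat.le_succ m))
      · exact ih (B.precompL E) (fderiv ℝ f) g hdf hg hv.fderivVO

variable {E : Type} [NormedAddCommGroup E] [NormedSpace ℝ E]

lemma vo_congr' {U : Set E} (hU : IsOpen U) (h0 : (0:E) ∈ U) {f g : E → ℂ}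
    (hfg : Set.EqOn f g U) (j : ℕ) :
    iteratedFDeriv ℝ j g 0 = iteratedFDeriv ℝ j f 0 := by
  have h : g =ᶠ[𝓝[Set.univ] (0:E)] f := by
    rw [nhdsWithin_univ]
    exact Filter.eventuallyEq_of_mem (hU.mem_nhds h0) (fun y hy => (hfg hy).symm)
  have := Filter.EventuallyEq.iteratedFDerivWithin_eq (𝕜 := ℝ) h (hfg h0).symm j
  simpa [iteratedFDerivWithin_univ] using this

lemma smooth_extension [FiniteDimensional ℝ E] {U : Set E} (hU : IsOpen U) (h0 : (0:E) ∈ U)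
    {f : E → ℂ} (hf : ContDiffOn ℝ ∞ f U) :
    ∃ g : E → ℂ, ContDiff ℝ ∞ g ∧ ∃ V : Set E, IsOpen V ∧ (0:E) ∈ V ∧ Set.EqOn f g V := by
  obtain ⟨ε, hε, hball⟩ := Metric.isOpen_iff.1 hU 0 h0
  have hq : (0:ℝ) < ε/4 := by linarith
  set φ : ContDiffBump (0:E) := ⟨ε/4, ε/2, by linarith, by linarith⟩ with hφ
  have htsupp : tsupport (φ : E → ℝ) ⊆ U := by
    rw [φ.tsupport_eq]
    intro y hy
    exact hball (by
      have : dist y 0 ≤ ε/2 := by simpa [Metric.mem_closedBall] using hy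
      simp only [Metric.mem_ball]
      linarith)
  refine ⟨fun x => φ x • f x, ?_, Metric.ball 0 (ε/4), Metric.isOpen_ball, by simpa using hq, ?_⟩
  · rw [contDiff_iff_contDiffAt]
    intro x
    by_cases hx : x ∈ U
    · exact (φ.contDiff.contDiffAt).smul (hf.contDiffAt (hU.mem_nhds hx))
    · have hx' : x ∈ (tsupport (φ : E → ℝ))ᶜ := fun hc => hx (htsupp hc)
      have hev : (fun x => φ x • f x) =ᶠ[𝓝 x] (fun _ => (0:ℂ)) := by
        filter_upwards [(isClosed_tsupport (φ : E → ℝ)).isOpen_compl.mem_nhds hx'] with y hy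
        simp [image_eq_zero_of_notMem_tsupport hy]
      exact (contDiffAt_const (c := (0:ℂ))).congr_of_eventuallyEq hev
  · intro y hy
    have h1 : φ y = 1 := φ.one_of_mem_closedBall (by
      simp only [Metric.mem_closedBall]
      have : dist y 0 < ε/4 := by simpa [Metric.mem_ball] using hy
      linarith [show φ.rIn = ε/4 from rfl])
    simp [h1]


variable {N : ℕ}

/-- generic Wirtinger-type operator: `ε = -I` gives `wdz`, `ε = I` gives `wdzbar`. -/
def Wop (k : Fin N) (ε : ℂ) (f : (Fin N → ℂ) → ℂ) (x : Fin N → ℂ) : ℂ :=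
  (1 / 2) * (fderiv ℝ f x (ebas k) + ε * fderiv ℝ f x (Complex.I • ebas k))

lemma wdz_eq_wop (k : Fin N) : (wdz k : ((Fin N → ℂ) → ℂ) → _) = Wop k (-Complex.I) := by
  funext f x; simp only [wdz, Wop]; ring

lemma wdzbar_eq_wop (k : Fin N) : (wdzbar k : ((Fin N → ℂ) → ℂ) → _) = Wop k Complex.I := by
  funext f x; simp only [wdzbar, Wop]

/-- the scaling `x ↦ I • x` as a real-linear continuous map. -/
def sI (N : ℕ) : (Fin N → ℂ) →L[ℝ] (Fin N → ℂ) :=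
  Complex.I • ContinuousLinearMap.id ℝ (Fin N → ℂ)

lemma sI_apply (x : Fin N → ℂ) : sI N x = Complex.I • x := rfl

lemma wop_smooth {f : (Fin N → ℂ) → ℂ} (hf : ContDiff ℝ ∞ f) (k : Fin N) (ε : ℂ) :
    ContDiff ℝ ∞ (Wop k ε f) := by
  have hd : ContDiff ℝ ∞ (fderiv ℝ f) := hf.fderiv_right (by exact_mod_cast le_top)
  have h1 : ContDiff ℝ ∞ (fun x => fderiv ℝ f x (ebas k)) := hd.clm_apply contDiff_const
  have h2 : ContDiff ℝ ∞ (fun x => fderiv ℝ f x (Complex.I • ebas k)) :=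
    hd.clm_apply contDiff_const
  exact contDiff_const.mul (h1.add (contDiff_const.mul h2))

lemma wop_contDiffOn {U : Set (Fin N → ℂ)} (hU : IsOpen U) {f : (Fin N → ℂ) → ℂ}
    (hf : ContDiffOn ℝ ∞ f U) (k : Fin N) (ε : ℂ) : ContDiffOn ℝ ∞ (Wop k ε f) U := by
  have hd : ContDiffOn ℝ ∞ (fderiv ℝ f) U :=
    hf.fderiv_of_isOpen hU (by exact_mod_cast le_top)
  have h1 : ContDiffOn ℝ ∞ (fun x => fderiv ℝ f x (ebas k)) U := hd.clm_apply contDiffOn_const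
  have h2 : ContDiffOn ℝ ∞ (fun x => fderiv ℝ f x (Complex.I • ebas k)) U :=
    hd.clm_apply contDiffOn_const
  exact contDiffOn_const.mul (h1.add (contDiffOn_const.mul h2))

lemma wop_congr {U : Set (Fin N → ℂ)} (hU : IsOpen U) {x : Fin N → ℂ} (hx : x ∈ U)
    {f g : (Fin N → ℂ) → ℂ} (hfg : Set.EqOn f g U) (k : Fin N) (ε : ℂ) :
    Wop k ε f x = Wop k ε g x := by
  have : fderiv ℝ f x = fderiv ℝ g x :=
    (Filter.eventuallyEq_of_mem (hU.mem_nhds hx) hfg).fderiv_eq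
  simp only [Wop, this]

lemma wop_add {f g : (Fin N → ℂ) → ℂ} {x : Fin N → ℂ} (hf : DifferentiableAt ℝ f x)
    (hg : DifferentiableAt ℝ g x) (k : Fin N) (ε : ℂ) :
    Wop k ε (fun y => f y + g y) x = Wop k ε f x + Wop k ε g x := by
  simp only [Wop, fderiv_fun_add hf hg]
  simp only [ContinuousLinearMap.add_apply]
  ring

lemma wop_const_mul {f : (Fin N → ℂ) → ℂ} {x : Fin N → ℂ} (hf : DifferentiableAt ℝ f x)
    (c : ℂ) (k : Fin N) (ε : ℂ) :
    Wop k ε (fun y => c * f y) x = c * Wop k ε f x := by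
  simp only [Wop, fderiv_const_mul hf c]
  simp only [ContinuousLinearMap.smul_apply, smul_eq_mul]
  ring

lemma wop_comp_smul {f : (Fin N → ℂ) → ℂ} {x : Fin N → ℂ}
    (hf : DifferentiableAt ℝ f (Complex.I • x)) (k : Fin N) {ε : ℂ} (hε : ε * ε = -1) :
    Wop k ε (fun y => f (Complex.I • y)) x = (-ε) * Wop k ε f (Complex.I • x) := by
  have hcomp : fderiv ℝ (fun y => f (Complex.I • y)) x = (fderiv ℝ f (Complex.I • x)).comp (sI N) := by
    have h1 : (fun y => f (Complex.I • y)) = f ∘ (sI N) := rfl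
    rw [h1, fderiv_comp x (by simpa [sI_apply] using hf) (sI N).differentiableAt,
      (sI N).fderiv]
    rfl
  have hs1 : (sI N) (ebas k) = Complex.I • ebas k := rfl
  have hs2 : (sI N) (Complex.I • ebas k) = -(ebas k) := by
    simp [sI_apply, smul_smul, Complex.I_mul_I]
  rw [Wop, Wop, hcomp]
  simp only [ContinuousLinearMap.comp_apply, hs1, hs2, map_neg]
  linear_combination (1/2 : ℂ) * (fderiv ℝ f (Complex.I • x) (Complex.I • ebas k)) * hε

lemma vo_bilinear_right (m : ℕ) {E F G H : Type} [NormedAddCommGroup E] [NormedSpace ℝ E]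
    [NormedAddCommGroup F] [NormedSpace ℝ F]
    [NormedAddCommGroup G] [NormedSpace ℝ G] [NormedAddCommGroup H] [NormedSpace ℝ H]
    (B : F →L[ℝ] G →L[ℝ] H) (f : E → F) (g : E → G)
    (hf : ContDiff ℝ ∞ f) (hg : ContDiff ℝ ∞ g) (hv : VO m g) :
    VO m (fun x => B (f x) (g x)) := by
  have := vo_bilinear (E := E) m B.flip g f hg hf hv
  simpa [ContinuousLinearMap.flip_apply] using this

lemma VO.mulVO {E : Type} [NormedAddCommGroup E] [NormedSpace ℝ E] {m : ℕ} {f g : E → ℂ}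
    (hf : ContDiff ℝ ∞ f) (hg : ContDiff ℝ ∞ g) (hv : VO m f) :
    VO m (fun x => f x * g x) := by
  simpa using vo_bilinear (E := E) m (ContinuousLinearMap.mul ℝ ℂ) f g hf hg hv

lemma VO.mulVO' {E : Type} [NormedAddCommGroup E] [NormedSpace ℝ E] {m : ℕ} {f g : E → ℂ}
    (hf : ContDiff ℝ ∞ f) (hg : ContDiff ℝ ∞ g) (hv : VO m g) :
    VO m (fun x => f x * g x) := by
  simpa using vo_bilinear_right (E := E) m (ContinuousLinearMap.mul ℝ ℂ) f g hf hg hv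

variable {N : ℕ}

lemma vo_wop {f : (Fin N → ℂ) → ℂ} (hf : ContDiff ℝ ∞ f) {m : ℕ} (hv : VO (m + 1) f)
    (k : Fin N) (ε : ℂ) : VO m (Wop k ε f) := by
  have hdf : ContDiff ℝ ∞ (fderiv ℝ f) := hf.fderiv_right (by exact_mod_cast le_top)
  have hu : ∀ v : Fin N → ℂ, VO m (fun x => fderiv ℝ f x v) := by
    intro v
    simpa using vo_bilinear (E := Fin N → ℂ) m (ContinuousLinearMap.apply ℝ ℂ).flip
      (fderiv ℝ f) (fun _ => v) hdf contDiff_const hv.fderivVO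
  have hus : ∀ v : Fin N → ℂ, ContDiff ℝ ∞ (fun x => fderiv ℝ f x v) := fun v =>
    hdf.clm_apply contDiff_const
  have h2 : VO m (fun x => ε * fderiv ℝ f x (Complex.I • ebas k)) :=
    VO.mulVO' contDiff_const (hus _) (hu _)
  have h3 : VO m (fun x => fderiv ℝ f x (ebas k) + ε * fderiv ℝ f x (Complex.I • ebas k)) :=
    VO.addVO (hus _) (contDiff_const.mul (hus _)) (hu _) h2
  exact VO.mulVO' contDiff_const
    ((hus (ebas k)).add (contDiff_const.mul (hus _))) h3

lemma vo_value1 {E : Type} [NormedAddCommGroup E] [NormedSpace ℝ E] {f : E → ℂ}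
    (h : VO 1 f) : f 0 = 0 := VO.value (m := 0) h

lemma wop_triple_vo {f : (Fin N → ℂ) → ℂ} (hf : ContDiff ℝ ∞ f) (hv : VO 4 f)
    (k₁ k₂ k₃ : Fin N) (ε₁ ε₂ ε₃ : ℂ) :
    Wop k₃ ε₃ (Wop k₂ ε₂ (Wop k₁ ε₁ f)) 0 = 0 := by
  have h1 : VO 3 (Wop k₁ ε₁ f) := vo_wop hf hv k₁ ε₁
  have s1 := wop_smooth hf k₁ ε₁
  have h2 : VO 2 (Wop k₂ ε₂ (Wop k₁ ε₁ f)) := vo_wop s1 h1 k₂ ε₂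
  have s2 := wop_smooth s1 k₂ ε₂
  have h3 : VO 1 (Wop k₃ ε₃ (Wop k₂ ε₂ (Wop k₁ ε₁ f))) := vo_wop s2 h2 k₃ ε₃
  exact vo_value1 h3

lemma wop_triple_congr {U : Set (Fin N → ℂ)} (hU : IsOpen U) (h0 : (0 : Fin N → ℂ) ∈ U)
    {f g : (Fin N → ℂ) → ℂ} (hfg : Set.EqOn f g U) (k₁ k₂ k₃ : Fin N) (ε₁ ε₂ ε₃ : ℂ) :
    Wop k₃ ε₃ (Wop k₂ ε₂ (Wop k₁ ε₁ f)) 0 = Wop k₃ ε₃ (Wop k₂ ε₂ (Wop k₁ ε₁ g)) 0 := by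
  have e1 : Set.EqOn (Wop k₁ ε₁ f) (Wop k₁ ε₁ g) U := fun x hx => wop_congr hU hx hfg k₁ ε₁
  have e2 : Set.EqOn (Wop k₂ ε₂ (Wop k₁ ε₁ f)) (Wop k₂ ε₂ (Wop k₁ ε₁ g)) U :=
    fun x hx => wop_congr hU hx e1 k₂ ε₂
  exact wop_congr hU h0 e2 k₃ ε₃

lemma diffAt_of_contDiffOn {U : Set (Fin N → ℂ)} (hU : IsOpen U) {f : (Fin N → ℂ) → ℂ}
    (hf : ContDiffOn ℝ ∞ f U) {x : Fin N → ℂ} (hx : x ∈ U) : DifferentiableAt ℝ f x :=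
  (hf.contDiffAt (hU.mem_nhds hx)).differentiableAt (by simp)

lemma wop_triple_add {U : Set (Fin N → ℂ)} (hU : IsOpen U) (h0 : (0 : Fin N → ℂ) ∈ U)
    {u w : (Fin N → ℂ) → ℂ} (hu : ContDiffOn ℝ ∞ u U) (hw : ContDiffOn ℝ ∞ w U)
    (k₁ k₂ k₃ : Fin N) (ε₁ ε₂ ε₃ : ℂ) :
    Wop k₃ ε₃ (Wop k₂ ε₂ (Wop k₁ ε₁ (fun y => u y + w y))) 0 =
      Wop k₃ ε₃ (Wop k₂ ε₂ (Wop k₁ ε₁ u)) 0 + Wop k₃ ε₃ (Wop k₂ ε₂ (Wop k₁ ε₁ w)) 0 := by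
  have e1 : Set.EqOn (Wop k₁ ε₁ (fun y => u y + w y))
      (fun y => Wop k₁ ε₁ u y + Wop k₁ ε₁ w y) U := fun x hx =>
    wop_add (diffAt_of_contDiffOn hU hu hx) (diffAt_of_contDiffOn hU hw hx) k₁ ε₁
  have hu1 := wop_contDiffOn hU hu k₁ ε₁
  have hw1 := wop_contDiffOn hU hw k₁ ε₁
  have e2 : Set.EqOn (Wop k₂ ε₂ (Wop k₁ ε₁ (fun y => u y + w y)))
      (fun y => Wop k₂ ε₂ (Wop k₁ ε₁ u) y + Wop k₂ ε₂ (Wop k₁ ε₁ w) y) U := by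
    intro x hx
    rw [wop_congr hU hx e1 k₂ ε₂]
    exact wop_add (diffAt_of_contDiffOn hU hu1 hx) (diffAt_of_contDiffOn hU hw1 hx) k₂ ε₂
  have hu2 := wop_contDiffOn hU hu1 k₂ ε₂
  have hw2 := wop_contDiffOn hU hw1 k₂ ε₂
  rw [wop_congr hU h0 e2 k₃ ε₃]
  exact wop_add (diffAt_of_contDiffOn hU hu2 h0) (diffAt_of_contDiffOn hU hw2 h0) k₃ ε₃

lemma wop_step {U : Set (Fin N → ℂ)} (hU : IsOpen U)
    (hmap : ∀ x ∈ U, Complex.I • x ∈ U) {f : (Fin N → ℂ) → ℂ}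
    (hf : ContDiffOn ℝ ∞ f U) {c : ℂ} (hc : ∀ x ∈ U, f x = c * f (Complex.I • x))
    {ε : ℂ} (hε : ε * ε = -1) (k : Fin N) :
    ∀ x ∈ U, Wop k ε f x = (c * -ε) * Wop k ε f (Complex.I • x) := by
  intro x hx
  have hdiffI : DifferentiableAt ℝ f (Complex.I • x) :=
    diffAt_of_contDiffOn hU hf (hmap x hx)
  have hcd : DifferentiableAt ℝ (fun y => f (Complex.I • y)) x := by
    have : (fun y => f (Complex.I • y)) = f ∘ (sI N) := rfl
    rw [this]
    exact DifferentiableAt.comp x hdiffI (sI N).differentiableAt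
  calc Wop k ε f x = Wop k ε (fun y => c * f (Complex.I • y)) x :=
        wop_congr hU hx (fun y hy => hc y hy) k ε
    _ = c * Wop k ε (fun y => f (Complex.I • y)) x := wop_const_mul hcd c k ε
    _ = c * (-ε * Wop k ε f (Complex.I • x)) := by rw [wop_comp_smul hdiffI k hε]
    _ = (c * -ε) * Wop k ε f (Complex.I • x) := by ring

lemma wop_triple_inv {U : Set (Fin N → ℂ)} (hU : IsOpen U) (h0 : (0 : Fin N → ℂ) ∈ U)
    (hmap : ∀ x ∈ U, Complex.I • x ∈ U) {G : (Fin N → ℂ) → ℂ}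
    (hG : ContDiffOn ℝ ∞ G U) (hGinv : ∀ x ∈ U, G (Complex.I • x) = G x)
    (k₁ k₂ k₃ : Fin N) {ε₁ ε₂ ε₃ : ℂ} (hε₁ : ε₁ * ε₁ = -1) (hε₂ : ε₂ * ε₂ = -1)
    (hε₃ : ε₃ * ε₃ = -1) :
    Wop k₃ ε₃ (Wop k₂ ε₂ (Wop k₁ ε₁ G)) 0 = 0 := by
  have h1c : ∀ x ∈ U, G x = 1 * G (Complex.I • x) := fun x hx => by
    rw [one_mul, hGinv x hx]
  have s1 := wop_step hU hmap hG h1c hε₁ k₁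
  have hG1 := wop_contDiffOn hU hG k₁ ε₁
  have s2 := wop_step hU hmap hG1 s1 hε₂ k₂
  have hG2 := wop_contDiffOn hU hG1 k₂ ε₂
  have s3 := wop_step hU hmap hG2 s2 hε₃ k₃
  have key := s3 0 h0
  rw [smul_zero] at key
  set a := Wop k₃ ε₃ (Wop k₂ ε₂ (Wop k₁ ε₁ G)) 0 with ha
  set w : ℂ := 1 * -ε₁ * -ε₂ * -ε₃ with hw
  have hww : w * w = -1 := by
    have : w * w = (ε₁ * ε₁) * (ε₂ * ε₂) * (ε₃ * ε₃) := by rw [hw]; ring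
    rw [this, hε₁, hε₂, hε₃]; ring
  linear_combination ((1 + w)/2) * key + (a/2) * hww

lemma VO.negVO {E : Type} [NormedAddCommGroup E] [NormedSpace ℝ E] {m : ℕ} {f : E → ℂ}
    (h : VO m f) : VO m (fun x => -f x) := by
  intro j hj
  have h2 := iteratedFDeriv_neg_apply (𝕜 := ℝ) (i := j) (f := f) (x := (0 : E))
  rw [show (-f) = fun x => -f x from rfl] at h2
  rw [h2, h j hj, neg_zero]

lemma VO.subVO {E : Type} [NormedAddCommGroup E] [NormedSpace ℝ E] {m : ℕ} {f g : E → ℂ}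
    (hf : ContDiff ℝ ∞ f) (hg : ContDiff ℝ ∞ g) (h1 : VO m f) (h2 : VO m g) :
    VO m (fun x => f x - g x) := by
  have heq : (fun x => f x - g x) = fun x => f x + -(g x) :=
    funext fun x => sub_eq_add_neg _ _
  rw [heq]
  exact VO.addVO hf hg.neg h1 h2.negVO

def q0F {N : ℕ} (Q : Fin N → Fin N → Fin N → Fin N → ℂ) : (Fin N → ℂ) → ℂ :=
  fun t => 1 - (∑ i : Fin N, t i * (starRingEnd ℂ) (t i)) +
    (1 / 4) * (∑ i : Fin N, ∑ k : Fin N, ∑ j : Fin N, ∑ l : Fin N,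
      Q i k j l * t i * t k * (starRingEnd ℂ) (t j) * (starRingEnd ℂ) (t l))

variable {N : ℕ} {Q : Fin N → Fin N → Fin N → Fin N → ℂ}

lemma proj_smooth (i : Fin N) : ContDiff ℝ ∞ (fun t : Fin N → ℂ => t i) :=
  (ContinuousLinearMap.proj (R := ℝ) (φ := fun _ : Fin N => ℂ) i).contDiff

lemma conj_proj_smooth (i : Fin N) :
    ContDiff ℝ ∞ (fun t : Fin N → ℂ => (starRingEnd ℂ) (t i)) :=
  ((Complex.conjCLE : ℂ ≃L[ℝ] ℂ).toContinuousLinearMap.contDiff).comp (proj_smooth i)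

lemma q0F_smooth : ContDiff ℝ ∞ (q0F Q) := by
  unfold q0F
  refine (contDiff_const.sub (ContDiff.sum fun i _ => (proj_smooth i).mul
    (conj_proj_smooth i))).add (contDiff_const.mul ?_)
  refine ContDiff.sum fun i _ => ContDiff.sum fun k _ => ContDiff.sum fun j _ =>
    ContDiff.sum fun l _ => ?_
  exact (((contDiff_const.mul (proj_smooth i)).mul (proj_smooth k)).mul
    (conj_proj_smooth j)).mul (conj_proj_smooth l)

lemma q0F_zero : q0F Q 0 = 1 := by simp [q0F]

lemma q0F_inv (t : Fin N → ℂ) : q0F Q (Complex.I • t) = q0F Q t := by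
  unfold q0F
  have h2 : (∑ i : Fin N, (Complex.I • t) i * (starRingEnd ℂ) ((Complex.I • t) i)) =
      ∑ i : Fin N, t i * (starRingEnd ℂ) (t i) := by
    refine Finset.sum_congr rfl fun i _ => ?_
    simp only [Pi.smul_apply, smul_eq_mul, map_mul, Complex.conj_I]
    linear_combination (-(t i * (starRingEnd ℂ) (t i))) * Complex.I_mul_I
  have h4 : (∑ i : Fin N, ∑ k : Fin N, ∑ j : Fin N, ∑ l : Fin N,
      Q i k j l * (Complex.I • t) i * (Complex.I • t) k *
        (starRingEnd ℂ) ((Complex.I • t) j) * (starRingEnd ℂ) ((Complex.I • t) l)) =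
      ∑ i : Fin N, ∑ k : Fin N, ∑ j : Fin N, ∑ l : Fin N,
        Q i k j l * t i * t k * (starRingEnd ℂ) (t j) * (starRingEnd ℂ) (t l) := by
    refine Finset.sum_congr rfl fun i _ => Finset.sum_congr rfl fun k _ =>
      Finset.sum_congr rfl fun j _ => Finset.sum_congr rfl fun l _ => ?_
    simp only [Pi.smul_apply, smul_eq_mul, map_mul, Complex.conj_I]
    linear_combination (Q i k j l * t i * t k * (starRingEnd ℂ) (t j) * (starRingEnd ℂ) (t l) *
      (Complex.I * Complex.I - 1)) * Complex.I_mul_I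
  rw [h2, h4]


/-- If `q(t) = 1 − Σ t_i t̄_i + ¼ Σ q_{ik,j̄l̄} t_i t_k t̄_j t̄_l + R(t)` with `R`
vanishing to order `6` at `0` (i.e. the degree-5 part of the Weil–Petersson potential
vanishes), then every third-order Wirtinger derivative of every `g_{k l̄}` vanishes at
the origin.  (This is the computational core of: no weak quantum correction forces
`∇R = 0`, i.e. the Weil–Petersson metric is locally Hermitian symmetric.) -/
theorem wp_locally_symmetric (N : ℕ) (hN : 1 ≤ N)
    (Q : Fin N → Fin N → Fin N → Fin N → ℂ)
    (hQ₁ : ∀ i k j l, Q i k j l = Q k i j l)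
    (hQ₂ : ∀ i k j l, Q i k j l = Q i k l j)
    (q R : (Fin N → ℂ) → ℂ) (hq : ContDiff ℝ (⊤ : ℕ∞) q)
    (hR : vanishesToOrder 6 R)
    (hqR : ∀ t : Fin N → ℂ,
      q t = 1 - (∑ i : Fin N, t i * (starRingEnd ℂ) (t i)) +
        (1 / 4) * (∑ i : Fin N, ∑ k : Fin N, ∑ j : Fin N, ∑ l : Fin N,
          Q i k j l * t i * t k * (starRingEnd ℂ) (t j) * (starRingEnd ℂ) (t l)) +
        R t) :
    ∀ i j r k l : Fin N,
      wdz r (wdz i (wdzbar j (gWP q k l))) 0 = 0 ∧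
      wdzbar r (wdz i (wdzbar j (gWP q k l))) 0 = 0 ∧
      wdz r (wdz i (wdz j (gWP q k l))) 0 = 0 ∧
      wdzbar r (wdzbar i (wdzbar j (gWP q k l))) 0 = 0 := by
  have hqs : ContDiff ℝ ∞ q := hq.of_le (by simp)
  have hq0s : ContDiff ℝ ∞ (q0F Q) := q0F_smooth
  have hqeq : q = fun t => q0F Q t + R t := funext fun t => by rw [hqR t]; simp only [q0F]; try ring
  have hRs : ContDiff ℝ ∞ R := by
    have hRe : R = fun t => q t - q0F Q t := funext fun t => by rw [congrFun hqeq t]; ring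
    rw [hRe]; exact hqs.sub hq0s
  have hVO6 : VO 6 R := fun j hj => hR j hj
  have hR0 : R 0 = 0 := VO.value (m := 5) hVO6
  have hq00 : q0F Q 0 = 1 := q0F_zero
  have hq_0 : q 0 = 1 := by rw [congrFun hqeq 0, hq00, hR0, add_zero]
  have hmI : (-Complex.I) * (-Complex.I) = -1 := by rw [neg_mul_neg, Complex.I_mul_I]
  have hI : Complex.I * Complex.I = -1 := Complex.I_mul_I
  have hone : ((1 : ℕ∞) : WithTop ℕ∞) ≤ ∞ := by exact_mod_cast le_top
  have hdiffq : Differentiable ℝ q := hqs.differentiable (by simp)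
  have hdiffq0 : Differentiable ℝ (q0F Q) := hq0s.differentiable (by simp)
  have hdiffR : Differentiable ℝ R := hRs.differentiable (by simp)
  intro i j r k l
  have key : ∀ (a b c : Fin N) (ε₁ ε₂ ε₃ : ℂ), ε₁ * ε₁ = -1 → ε₂ * ε₂ = -1 → ε₃ * ε₃ = -1 →
      Wop c ε₃ (Wop b ε₂ (Wop a ε₁ (gWP q k l))) 0 = 0 := by
    intro a b c ε₁ ε₂ ε₃ hε₁ hε₂ hε₃
    -- open sets
    have hU₀open : IsOpen {x : Fin N → ℂ | q0F Q x ≠ 0} :=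
      isOpen_compl_singleton.preimage hq0s.continuous
    have hU₀0 : (0 : Fin N → ℂ) ∈ {x : Fin N → ℂ | q0F Q x ≠ 0} := by
      simp [Set.mem_setOf_eq, hq00]
    have hU₀map : ∀ x ∈ {x : Fin N → ℂ | q0F Q x ≠ 0},
        Complex.I • x ∈ {x : Fin N → ℂ | q0F Q x ≠ 0} := by
      intro x hx
      simp only [Set.mem_setOf_eq, q0F_inv] at hx ⊢
      exact hx
    have hUopen : IsOpen {x : Fin N → ℂ | q x ≠ 0 ∧ q0F Q x ≠ 0} := by
      rw [Set.setOf_and]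
      exact (isOpen_compl_singleton.preimage hqs.continuous).inter hU₀open
    have hU0 : (0 : Fin N → ℂ) ∈ {x : Fin N → ℂ | q x ≠ 0 ∧ q0F Q x ≠ 0} := by
      simp [Set.mem_setOf_eq, hq_0, hq00]
    -- scaling lemma
    have hscale : ∀ (f : (Fin N → ℂ) → ℂ), ContDiff ℝ ∞ f → ∀ (ε₀ : ℂ),
        (∀ y, f (Complex.I • y) = ε₀ * f y) → ∀ (m : Fin N) (ε : ℂ), ε * ε = -1 →
        ∀ x, Wop m ε f (Complex.I • x) = (ε * ε₀) * Wop m ε f x := by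
      intro f hf ε₀ h₀ m ε hε x
      have hd : DifferentiableAt ℝ f (Complex.I • x) := (hf.differentiable (by simp)) _
      have h2 := wop_comp_smul hd m hε
      have h3 : Wop m ε (fun y => f (Complex.I • y)) x = ε₀ * Wop m ε f x := by
        have he : (fun y => f (Complex.I • y)) = fun y => ε₀ * f y := funext fun y => h₀ y
        rw [he, wop_const_mul ((hf.differentiable (by simp)) x) ε₀]
      rw [h3] at h2
      linear_combination (-ε) * h2 + (Wop m ε f (Complex.I • x)) * hε
    -- the model metric g₀ and its invariance
    set g₀ : (Fin N → ℂ) → ℂ := fun x =>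
      (Wop k (-Complex.I) (q0F Q) x * Wop l Complex.I (q0F Q) x -
        q0F Q x * Wop k (-Complex.I) (Wop l Complex.I (q0F Q)) x) / (q0F Q x) ^ 2 with hg₀def
    have hq0inv1 : ∀ y, q0F Q (Complex.I • y) = (1 : ℂ) * q0F Q y := fun y => by
      rw [one_mul, q0F_inv]
    have hWa := hscale (q0F Q) hq0s 1 hq0inv1 k (-Complex.I) hmI
    have hWb := hscale (q0F Q) hq0s 1 hq0inv1 l Complex.I hI
    have hW2 := hscale (Wop l Complex.I (q0F Q)) (wop_smooth hq0s l Complex.I)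
      (Complex.I * 1) (fun y => hWb y) k (-Complex.I) hmI
    have hg₀inv : ∀ x ∈ {x : Fin N → ℂ | q0F Q x ≠ 0}, g₀ (Complex.I • x) = g₀ x := by
      intro x _
      simp only [hg₀def]
      rw [hWa x, hWb x, hW2 x, q0F_inv x]
      congr 1
      linear_combination (q0F Q x * Wop k (-Complex.I) (Wop l Complex.I (q0F Q)) x -
        Wop k (-Complex.I) (q0F Q) x * Wop l Complex.I (q0F Q) x) * Complex.I_mul_I
    have hg₀cd : ContDiffOn ℝ ∞ g₀ {x : Fin N → ℂ | q0F Q x ≠ 0} := by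
      rw [hg₀def]
      have hrw : (fun x => (Wop k (-Complex.I) (q0F Q) x * Wop l Complex.I (q0F Q) x -
          q0F Q x * Wop k (-Complex.I) (Wop l Complex.I (q0F Q)) x) / (q0F Q x) ^ 2) =
          fun x => (Wop k (-Complex.I) (q0F Q) x * Wop l Complex.I (q0F Q) x -
          q0F Q x * Wop k (-Complex.I) (Wop l Complex.I (q0F Q)) x) * ((q0F Q x) ^ 2)⁻¹ :=
        funext fun x => div_eq_mul_inv _ _
      rw [hrw]
      refine ContDiffOn.mul ?_ (ContDiffOn.inv ((hq0s.pow 2).contDiffOn) ?_)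
      · exact (((wop_smooth hq0s k _).mul (wop_smooth hq0s l _)).sub
          (hq0s.mul (wop_smooth (wop_smooth hq0s l _) k _))).contDiffOn
      · intro x hx
        exact pow_ne_zero 2 hx
    have part1 : Wop c ε₃ (Wop b ε₂ (Wop a ε₁ g₀)) 0 = 0 :=
      wop_triple_inv hU₀open hU₀0 hU₀map hg₀cd hg₀inv a b c hε₁ hε₂ hε₃
    -- the perturbation
    set nn : (Fin N → ℂ) → ℂ := fun x =>
      (Wop k (-Complex.I) q x * Wop l Complex.I q x -
         q x * Wop k (-Complex.I) (Wop l Complex.I q) x) * (q0F Q x) ^ 2 -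
      (Wop k (-Complex.I) (q0F Q) x * Wop l Complex.I (q0F Q) x -
         q0F Q x * Wop k (-Complex.I) (Wop l Complex.I (q0F Q)) x) * (q x) ^ 2 with hnn
    set inv2 : (Fin N → ℂ) → ℂ := fun x => ((q x) ^ 2 * (q0F Q x) ^ 2)⁻¹ with hinv2
    set D : (Fin N → ℂ) → ℂ := fun x => nn x * inv2 x with hD
    have hnns : ContDiff ℝ ∞ nn := by
      rw [hnn]
      exact ((((wop_smooth hqs k _).mul (wop_smooth hqs l _)).sub
          (hqs.mul (wop_smooth (wop_smooth hqs l _) k _))).mul (hq0s.pow 2)).sub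
        ((((wop_smooth hq0s k _).mul (wop_smooth hq0s l _)).sub
          (hq0s.mul (wop_smooth (wop_smooth hq0s l _) k _))).mul (hqs.pow 2))
    -- expansion of the Wirtinger derivatives of q
    have e1 : ∀ (m : Fin N) (ε : ℂ) (x : Fin N → ℂ),
        Wop m ε q x = Wop m ε (q0F Q) x + Wop m ε R x := by
      intro m ε x
      rw [hqeq]
      exact wop_add (hdiffq0 x) (hdiffR x) m ε
    have e2 : ∀ x : Fin N → ℂ, Wop k (-Complex.I) (Wop l Complex.I q) x =
        Wop k (-Complex.I) (Wop l Complex.I (q0F Q)) x +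
        Wop k (-Complex.I) (Wop l Complex.I R) x := by
      intro x
      have hfun : Wop l Complex.I q =
          fun y => Wop l Complex.I (q0F Q) y + Wop l Complex.I R y :=
        funext fun y => e1 l Complex.I y
      rw [hfun]
      exact wop_add (((wop_smooth hq0s l _).differentiable (by simp)) x)
        (((wop_smooth hRs l _).differentiable (by simp)) x) k _
    -- vanishing orders
    have hR5a : VO 5 (Wop k (-Complex.I) R) := vo_wop hRs hVO6 k _
    have hR5b : VO 5 (Wop l Complex.I R) := vo_wop hRs hVO6 l _
    have hR4 : VO 4 (Wop k (-Complex.I) (Wop l Complex.I R)) :=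
      vo_wop (wop_smooth hRs l _) hR5b k _
    have hsplit1 : (fun x => (Wop k (-Complex.I) q x * Wop l Complex.I q x -
          q x * Wop k (-Complex.I) (Wop l Complex.I q) x) -
        (Wop k (-Complex.I) (q0F Q) x * Wop l Complex.I (q0F Q) x -
          q0F Q x * Wop k (-Complex.I) (Wop l Complex.I (q0F Q)) x)) =
        fun x => ((Wop k (-Complex.I) R x * Wop l Complex.I q x +
          Wop k (-Complex.I) (q0F Q) x * Wop l Complex.I R x) -
          R x * Wop k (-Complex.I) (Wop l Complex.I q) x) -
          q0F Q x * Wop k (-Complex.I) (Wop l Complex.I R) x := by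
      funext x
      rw [e1 k _ x, e1 l _ x, e2 x, congrFun hqeq x]
      ring
    have hVOT1 : VO 4 (fun x => (Wop k (-Complex.I) q x * Wop l Complex.I q x -
          q x * Wop k (-Complex.I) (Wop l Complex.I q) x) -
        (Wop k (-Complex.I) (q0F Q) x * Wop l Complex.I (q0F Q) x -
          q0F Q x * Wop k (-Complex.I) (Wop l Complex.I (q0F Q)) x)) := by
      rw [hsplit1]
      refine VO.subVO ?_ ?_ (VO.subVO ?_ ?_ (VO.addVO ?_ ?_ ?_ ?_) ?_) ?_
      · exact (((wop_smooth hRs k _).mul (wop_smooth hqs l _)).add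
          ((wop_smooth hq0s k _).mul (wop_smooth hRs l _))).sub
          (hRs.mul (wop_smooth (wop_smooth hqs l _) k _))
      · exact hq0s.mul (wop_smooth (wop_smooth hRs l _) k _)
      · exact ((wop_smooth hRs k _).mul (wop_smooth hqs l _)).add
          ((wop_smooth hq0s k _).mul (wop_smooth hRs l _))
      · exact hRs.mul (wop_smooth (wop_smooth hqs l _) k _)
      · exact (wop_smooth hRs k _).mul (wop_smooth hqs l _)
      · exact (wop_smooth hq0s k _).mul (wop_smooth hRs l _)
      · exact VO.mulVO (wop_smooth hRs k _) (wop_smooth hqs l _) (hR5a.mono (by norm_num))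
      · exact VO.mulVO' (wop_smooth hq0s k _) (wop_smooth hRs l _) (hR5b.mono (by norm_num))
      · exact VO.mulVO hRs (wop_smooth (wop_smooth hqs l _) k _) (hVO6.mono (by norm_num))
      · exact VO.mulVO' hq0s (wop_smooth (wop_smooth hRs l _) k _) hR4
    have hsplit2 : (fun x => (q0F Q x) ^ 2 - (q x) ^ 2) =
        fun x => -(R x * (q0F Q x + q x)) := by
      funext x
      rw [congrFun hqeq x]
      ring
    have hVOq2 : VO 4 (fun x => (q0F Q x) ^ 2 - (q x) ^ 2) := by
      rw [hsplit2]
      exact (VO.mulVO hRs (hq0s.add hqs) (hVO6.mono (by norm_num))).negVO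
    have hnn2 : nn = fun x =>
        ((Wop k (-Complex.I) q x * Wop l Complex.I q x -
          q x * Wop k (-Complex.I) (Wop l Complex.I q) x) -
         (Wop k (-Complex.I) (q0F Q) x * Wop l Complex.I (q0F Q) x -
          q0F Q x * Wop k (-Complex.I) (Wop l Complex.I (q0F Q)) x)) * (q0F Q x) ^ 2 +
        (Wop k (-Complex.I) (q0F Q) x * Wop l Complex.I (q0F Q) x -
          q0F Q x * Wop k (-Complex.I) (Wop l Complex.I (q0F Q)) x) *
          ((q0F Q x) ^ 2 - (q x) ^ 2) := by
      rw [hnn]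
      funext x
      ring
    have hA0s : ContDiff ℝ ∞ (fun x => Wop k (-Complex.I) (q0F Q) x * Wop l Complex.I (q0F Q) x -
        q0F Q x * Wop k (-Complex.I) (Wop l Complex.I (q0F Q)) x) :=
      ((wop_smooth hq0s k _).mul (wop_smooth hq0s l _)).sub
        (hq0s.mul (wop_smooth (wop_smooth hq0s l _) k _))
    have hAs : ContDiff ℝ ∞ (fun x => Wop k (-Complex.I) q x * Wop l Complex.I q x -
        q x * Wop k (-Complex.I) (Wop l Complex.I q) x) :=
      ((wop_smooth hqs k _).mul (wop_smooth hqs l _)).sub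
        (hqs.mul (wop_smooth (wop_smooth hqs l _) k _))
    have hVOnn : VO 4 nn := by
      rw [hnn2]
      exact VO.addVO ((hAs.sub hA0s).mul (hq0s.pow 2))
        (hA0s.mul ((hq0s.pow 2).sub (hqs.pow 2)))
        (VO.mulVO (hAs.sub hA0s) (hq0s.pow 2) hVOT1)
        (VO.mulVO' hA0s ((hq0s.pow 2).sub (hqs.pow 2)) hVOq2)
    -- extend the inverse factor smoothly
    have hinv2cd : ContDiffOn ℝ ∞ inv2 {x : Fin N → ℂ | q x ≠ 0 ∧ q0F Q x ≠ 0} := by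
      rw [hinv2]
      exact ContDiffOn.inv ((hqs.pow 2).contDiffOn.mul (hq0s.pow 2).contDiffOn)
        (fun x hx => mul_ne_zero (pow_ne_zero 2 hx.1) (pow_ne_zero 2 hx.2))
    obtain ⟨ht, hts, V, hVopen, hV0, hEqV⟩ := smooth_extension hUopen hU0 hinv2cd
    have part2 : Wop c ε₃ (Wop b ε₂ (Wop a ε₁ D)) 0 = 0 := by
      have e : Set.EqOn D (fun y => nn y * ht y) V := by
        intro x hx
        rw [hD]
        simp only
        rw [hEqV hx]
      rw [wop_triple_congr hVopen hV0 e a b c ε₁ ε₂ ε₃]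
      exact wop_triple_vo (hnns.mul hts) (VO.mulVO hnns hts hVOnn) a b c ε₁ ε₂ ε₃
    -- decomposition of gWP q k l
    have hgWP : Set.EqOn (gWP q k l) (fun y => g₀ y + D y)
        {x : Fin N → ℂ | q x ≠ 0 ∧ q0F Q x ≠ 0} := by
      intro x hx
      have hqx : q x ≠ 0 := hx.1
      have hq0x : q0F Q x ≠ 0 := hx.2
      simp only [gWP, wdz_eq_wop, wdzbar_eq_wop, hg₀def, hD, hnn, hinv2]
      field_simp
      ring
    rw [wop_triple_congr hUopen hU0 hgWP a b c ε₁ ε₂ ε₃,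
      wop_triple_add hUopen hU0 (hg₀cd.mono (fun x hx => hx.2))
        (hnns.contDiffOn.mul hinv2cd) a b c ε₁ ε₂ ε₃,
      part1, part2, add_zero]
  refine ⟨?_, ?_, ?_, ?_⟩
  · simp only [wdz_eq_wop, wdzbar_eq_wop]
    exact key j i r Complex.I (-Complex.I) (-Complex.I) hI hmI hmI
  · simp only [wdz_eq_wop, wdzbar_eq_wop]
    exact key j i r Complex.I (-Complex.I) Complex.I hI hmI hI
  · simp only [wdz_eq_wop]
    exact key j i r (-Complex.I) (-Complex.I) (-Complex.I) hmI hmI hmI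
  · simp only [wdzbar_eq_wop]
    exact key j i r Complex.I Complex.I Complex.I hI hI hI
end AuxVO
end
end
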